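/- arXiv:1309.7683 — 4 statements merged into one kernel-verified Lean document; each statement's English description precedes it below -/
import Mathlib

section
/- Every 2-connected graph with circumference t has pathwidth at most ⌊t/2⌋·(t−1). -/
open SimpleGraph

universe u v

section Defs

variable {V : Type u} {W : Type v}

/-- A path decomposition of `G`: a sequence of bags covering all edges and vertices,
with each vertex appearing in a consecutive interval of bags. -/
structure PathDecomp (G : SimpleGraph V) where
  n : ℕ
  bag : Fin (n + 1) → Finset V
  cov_edge : ∀ ⦃u w : V⦄, G.Adj u w → ∃ i, u ∈ bag i ∧ w ∈ bag i
  cov_vert : ∀ x : V, ∃ i, x ∈ bag i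
  interval : ∀ (x : V) (i j k : Fin (n + 1)), i ≤ j → j ≤ k →
    x ∈ bag i → x ∈ bag k → x ∈ bag j

/-- The pathwidth of `G` is at most `w`. -/
def pwLE (G : SimpleGraph V) (w : ℕ) : Prop :=
  ∃ D : PathDecomp G, ∀ i, (D.bag i).card ≤ w + 1

/-- The rooted pathwidth of `G` at `x` is at most `r`: there is a path decomposition
of width `≤ r` whose last bag contains `x`. -/
def rpwLE (G : SimpleGraph V) (x : V) (r : ℕ) : Prop :=
  ∃ D : PathDecomp G, x ∈ D.bag (Fin.last D.n) ∧ ∀ i, (D.bag i).card ≤ r + 1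

/-- The rooted pathwidth of `G` at `x`. -/
noncomputable def rpw (G : SimpleGraph V) (x : V) : ℕ := sInf {r | rpwLE G x r}

/-- `G` has a cycle of length `n`. -/
def HasCycleLen (G : SimpleGraph V) (n : ℕ) : Prop :=
  ∃ (x : V) (c : G.Walk x x), c.IsCycle ∧ c.length = n

/-- The circumference of `G` equals `t` (it is `0` if `G` is acyclic). -/
def CircumEq (G : SimpleGraph V) (t : ℕ) : Prop :=
  (∀ n, HasCycleLen G n → n ≤ t) ∧ (t = 0 ∨ HasCycleLen G t)

/-- `G` is `k`-connected: it has more than `k` vertices and stays connected after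
deleting any set of fewer than `k` vertices. -/
def KConn (G : SimpleGraph V) (k : ℕ) : Prop :=
  k < Nat.card V ∧
  ∀ S : Set V, S.Finite → S.ncard < k → (G.induce Sᶜ).Connected

/-- `G` has `k` pairwise vertex-disjoint cycles, each of length at least `t`. -/
def HasKDisjointCyclesLen (G : SimpleGraph V) (k t : ℕ) : Prop :=
  ∃ c : Fin k → Σ x : V, G.Walk x x,
    (∀ m, (c m).2.IsCycle ∧ t ≤ (c m).2.length) ∧
    ∀ m m', m ≠ m' → List.Disjoint (c m).2.support (c m').2.support

/-- `H` is a minor of `G`, witnessed by branch sets `br`. -/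
def IsMinorWithBranch (G : SimpleGraph V) (H : SimpleGraph W) (br : W → Set V) : Prop :=
  (∀ w, (G.induce (br w)).Connected) ∧
  (∀ w w', w ≠ w' → Disjoint (br w) (br w')) ∧
  (∀ ⦃w w'⦄, H.Adj w w' → ∃ u ∈ br w, ∃ u' ∈ br w', G.Adj u u')

/-- `H` is a minor of `G`. -/
def HasMinor (G : SimpleGraph V) (H : SimpleGraph W) : Prop :=
  ∃ br : W → Set V, IsMinorWithBranch G H br



/-- A rooted forest on `V`, given by a parent function together with a consistent
height function (the height of a vertex is its distance to the root of its component). -/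
structure RootedForest (V : Type u) where
  parent : V → Option V
  height : V → ℕ
  height_root : ∀ x, parent x = none → height x = 0
  height_child : ∀ ⦃x y⦄, parent x = some y → height x = height y + 1

/-- `x` is an ancestor of `y` (possibly `x = y`). -/
def RootedForest.Ancestor (F : RootedForest V) (x y : V) : Prop :=
  Relation.ReflTransGen (fun a b => F.parent a = some b) y x

/-- `x` is a proper ancestor of `y`. -/
def RootedForest.ProperAncestor (F : RootedForest V) (x y : V) : Prop :=
  Relation.TransGen (fun a b => F.parent a = some b) y x

/-- The treedepth of `G` is at most `d`: there is a rooted forest of height at most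
`d - 1` on `V(G)` whose closure contains `G`. -/
def treedepthLE (G : SimpleGraph V) (d : ℕ) : Prop :=
  ∃ F : RootedForest V, (∀ x, F.height x + 1 ≤ d) ∧
    ∀ ⦃x y⦄, G.Adj x y → F.ProperAncestor x y ∨ F.ProperAncestor y x

/-- Vertices of the complete binary tree of height `h`: binary strings of length at
most `h`; the parent of a nonempty string is its tail, the root is the empty string. -/
abbrev CBTVert (h : ℕ) := {l : List Bool // l.length ≤ h}

/-- The complete binary tree of height `h` as a simple graph. -/
def CBT (h : ℕ) : SimpleGraph (CBTVert h) where
  Adj u w := (∃ b, u.val = b :: w.val) ∨ (∃ b, w.val = b :: u.val)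
  symm := by constructor; intro u w hv; tauto
  loopless := by
    constructor
    rintro u (⟨b, hb⟩ | ⟨b, hb⟩) <;>
    · have := congrArg List.length hb
      simp at this

/-- The root of the complete binary tree. -/
def CBTroot (h : ℕ) : CBTVert h := ⟨[], by simp⟩

/-- The `m`-th leaf (in left-to-right order) of the complete binary tree of
height `h`: the binary string of length `h` whose bits are the binary digits of `m`,
most significant first. -/
def leafIdx (h : ℕ) (m : Fin (2 ^ h)) : CBTVert h :=
  ⟨(List.range h).map fun i => m.val.testBit (h - 1 - i), by simp⟩

/-- The graph obtained from `G` by adding `k` dominant vertices. -/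
def addDominant (G : SimpleGraph V) (k : ℕ) : SimpleGraph (V ⊕ Fin k) where
  Adj x y := (∃ a b, x = .inl a ∧ y = .inl b ∧ G.Adj a b) ∨
             (∃ a c, x = .inl a ∧ y = .inr c) ∨
             (∃ c a, x = .inr c ∧ y = .inl a) ∨
             (∃ c c', x = .inr c ∧ y = .inr c' ∧ c ≠ c')
  symm := by
    constructor
    rintro x y (⟨a,b,rfl,rfl,hab⟩|⟨a,c,rfl,rfl⟩|⟨c,a,rfl,rfl⟩|⟨c,c',rfl,rfl,hcc⟩)
    · exact Or.inl ⟨b,a,rfl,rfl,hab.symm⟩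
    · exact Or.inr (Or.inr (Or.inl ⟨c,a,rfl,rfl⟩))
    · exact Or.inr (Or.inl ⟨a,c,rfl,rfl⟩)
    · exact Or.inr (Or.inr (Or.inr ⟨c',c,rfl,rfl,hcc.symm⟩))
  loopless := by
    constructor
    rintro x (⟨a,b,rfl,h,hab⟩|⟨a,c,rfl,h⟩|⟨c,a,rfl,h⟩|⟨c,c',rfl,h,hcc⟩)
    · cases Sum.inl.inj h; exact G.irrefl hab
    · simp at h
    · simp at h
    · cases Sum.inr.inj h; exact hcc rfl

/-- The minimum size of a transversal of `G` (a set of vertices meeting all cycles). -/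
noncomputable def tau (G : SimpleGraph V) : ℕ :=
  sInf {n | ∃ S : Set V, S.ncard = n ∧ (G.induce Sᶜ).IsAcyclic}

/-- `x` is a cut-vertex of `G`. -/
def IsCutVertex (G : SimpleGraph V) (x : V) : Prop :=
  ∃ (u w : V) (hu : u ≠ x) (hw : w ≠ x),
    G.Reachable u w ∧ ¬ (G.induce {y | y ≠ x}).Reachable ⟨u, hu⟩ ⟨w, hw⟩

/-- A block of `G`: a maximal 2-connected subgraph, or a bridge edge,
or an isolated vertex. -/
def IsBlock (G : SimpleGraph V) (B : G.Subgraph) : Prop :=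
  (KConn B.coe 2 ∧ ∀ B' : G.Subgraph, B ≤ B' → KConn B'.coe 2 → B' = B) ∨
  (∃ (u w : V) (huw : G.Adj u w), G.IsBridge s(u, w) ∧ B = G.subgraphOfAdj huw) ∨
  (∃ x : V, (∀ u, ¬ G.Adj x u) ∧ B = G.singletonSubgraph x)

/-- The block-cut-forest of `G`: vertices are the cut-vertices and the blocks of `G`,
with a cut-vertex adjacent to exactly the blocks containing it. -/
def BCF (G : SimpleGraph V) :
    SimpleGraph ({x : V // IsCutVertex G x} ⊕ {B : G.Subgraph // IsBlock G B}) where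
  Adj x y := (∃ v B, x = .inl v ∧ y = .inr B ∧ v.val ∈ B.val.verts) ∨
             (∃ v B, x = .inr B ∧ y = .inl v ∧ v.val ∈ B.val.verts)
  symm := by
    constructor
    rintro x y (⟨v,B,rfl,rfl,hm⟩|⟨v,B,rfl,rfl,hm⟩)
    · exact Or.inr ⟨v,B,rfl,rfl,hm⟩
    · exact Or.inl ⟨v,B,rfl,rfl,hm⟩
  loopless := by
    constructor
    rintro x (⟨v,B,rfl,h,_⟩|⟨v,B,rfl,h,_⟩) <;> simp at h

/-- The octahedron `K_{2,2,2}` minus the edges of a triangle: parts are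
`{i} × {0,1}`; the deleted triangle consists of the vertices `(i, 0)`. -/
def Qgraph : SimpleGraph (Fin 3 × Fin 2) where
  Adj x y := x.1 ≠ y.1 ∧ ¬(x.2 = 0 ∧ y.2 = 0)
  symm := ⟨fun x y h => ⟨h.1.symm, fun hc => h.2 ⟨hc.2, hc.1⟩⟩⟩
  loopless := ⟨fun x h => h.1 rfl⟩

/-- The disjoint union of two triangles. -/
def TwoTriangles : SimpleGraph (Fin 3 ⊕ Fin 3) where
  Adj x y := (∃ a b, x = .inl a ∧ y = .inl b ∧ a ≠ b) ∨
             (∃ a b, x = .inr a ∧ y = .inr b ∧ a ≠ b)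
  symm := by
    constructor
    rintro x y (⟨a,b,rfl,rfl,hab⟩|⟨a,b,rfl,rfl,hab⟩)
    · exact Or.inl ⟨b,a,rfl,rfl,hab.symm⟩
    · exact Or.inr ⟨b,a,rfl,rfl,hab.symm⟩
  loopless := by
    constructor
    rintro x (⟨a,b,rfl,h,hab⟩|⟨a,b,rfl,h,hab⟩) <;>
    · first
      | (cases Sum.inl.inj h; exact hab rfl)
      | (cases Sum.inr.inj h; exact hab rfl)

/-- `A` contains a subdivision of `B` as a subgraph: branch vertices are given by an
injective map `f`, and each edge of `B` is replaced by a path in `A`; distinct edges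
give internally disjoint paths, and no branch vertex lies in the interior of a path. -/
def ContainsSubdivision (A : SimpleGraph V) (B : SimpleGraph W) : Prop :=
  ∃ (f : W → V) (P : ∀ ⦃u w : W⦄, B.Adj u w → A.Walk (f u) (f w)),
    Function.Injective f ∧
    (∀ ⦃u w : W⦄ (h : B.Adj u w), (P h).IsPath) ∧
    (∀ ⦃u w : W⦄ (h : B.Adj u w) (x : W), f x ∈ (P h).support → x = u ∨ x = w) ∧
    (∀ ⦃u w x y : W⦄ (h : B.Adj u w) (h' : B.Adj x y), s(u, w) ≠ s(x, y) →
      ∀ z, z ∈ (P h).support → z ∈ (P h').support →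
        z ∈ ({f u, f w} : Set V) ∩ {f x, f y})



end Defs

/-!
A depth-first search (normal) spanning tree `T` of `G`, with its vertices numbered in preorder,
yields a path decomposition whose bags are the ancestor sets of the vertices, taken in that order;
its width is the depth of `T`. So it suffices that every vertex `z` has depth
`h ≤ ⌊t/2⌋ (t - 1)`.

Let `v 0, …, v h = z` be the root path. By 2-connectivity, for `1 ≤ i < h` some descendant of
`v (i + 1)` is adjacent to some `v j` with `j < i`. Starting from `i = h - 1` and always jumping to
the least such `j` produces ears `1, …, k` along the root path, consecutive ones overlapping and
those two apart disjoint. Each ear closes a cycle with the root path, and alternating between the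
even and the odd ears gives one more cycle through all of them. These `k + 1` cycles of length
`≤ t` cover every edge of the root path twice, and the last one has length `> k`; together this
gives `2h ≤ t (t - 2) + 2`.
-/

open Finset

variable {V : Type*} {G : SimpleGraph V}

/-! ### Walks -/

namespace SimpleGraph.Walk

lemma IsPath.append {u w x : V} {p : G.Walk u w} {q : G.Walk w x} (hp : p.IsPath)
    (hq : q.IsPath) (h : ∀ y ∈ p.support, y ∈ q.support → y = w) : (p.append q).IsPath := by
  rw [isPath_def, support_append, List.nodup_append]
  refine ⟨hp.support_nodup, hq.support_nodup.sublist (List.tail_sublist _), ?_⟩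
  rintro y hyp _ hyq rfl
  have hnd := hq.support_nodup
  rw [← cons_tail_support] at hnd
  exact (List.nodup_cons.1 hnd).1 (h y hyp (List.mem_of_mem_tail hyq) ▸ hyq)

lemma IsPath.ne_start_of_mem_tail {u w y : V} {p : G.Walk u w} (hp : p.IsPath)
    (hy : y ∈ p.support.tail) : y ≠ u := by
  have hnd := hp.support_nodup
  rw [← cons_tail_support] at hnd
  rintro rfl
  exact (List.nodup_cons.1 hnd).1 hy

end SimpleGraph.Walk

lemma exists_walk_in_sdiff [DecidableEq V] {S C : Finset V} {r : V}
    (hsep : ∀ a ∈ C, ∀ b ∈ S \ C, G.Adj a b → b = r) :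
    ∀ {x : V} (w : G.Walk x r), (∀ y ∈ w.support, y ∈ S) → x ∉ C →
      ∃ w' : G.Walk x r, ∀ y ∈ w'.support, y ∈ S \ C
  | _, .nil, hw, hx => ⟨.nil, by simpa [hx] using hw⟩
  | x, .cons (v := c) hxc w, hw, hx => by
    by_cases hxr : x = r
    · subst hxr; exact ⟨.nil, by simpa [hx] using hw x (by simp)⟩
    have hc : c ∉ C := fun hc =>
      hxr (hsep c hc x (mem_sdiff.2 ⟨hw x (by simp), hx⟩) hxc.symm)
    obtain ⟨w', hw'⟩ := exists_walk_in_sdiff hsep w (fun y hy => hw y (by simp [hy])) hc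
    exact ⟨.cons hxc w', by simpa [hw x (by simp), hx] using hw'⟩

/-- The component `C` of `S - r` containing a neighbour `u` of `r`. -/
lemma exists_component [DecidableEq V] {S : Finset V} {r x : V} (hxS : x ∈ S) (hxr : x ≠ r)
    (hS : ∀ x ∈ S, ∃ w : G.Walk x r, ∀ y ∈ w.support, y ∈ S) :
    ∃ C : Finset V, ∃ u ∈ C, C ⊆ S.erase r ∧ G.Adj u r ∧
      (∀ a ∈ C, ∀ b ∈ S \ C, G.Adj a b → b = r) ∧
      (∀ x ∈ C, ∃ w : G.Walk x u, ∀ y ∈ w.support, y ∈ C) ∧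
      (∀ x ∈ S \ C, ∃ w : G.Walk x r, ∀ y ∈ w.support, y ∈ S \ C) := by
  classical
  obtain ⟨w, hw⟩ := hS x hxS
  have hwn : ¬ w.Nil := Walk.not_nil_of_ne hxr
  set u := w.penultimate
  have hur : G.Adj u r := w.adj_penultimate hwn
  have huS : u ∈ S.erase r := mem_erase.2 ⟨hur.ne, hw u (w.getVert_mem_support _)⟩
  set C := (S.erase r).filter fun x => ∃ w : G.Walk x u, ∀ y ∈ w.support, y ∈ S.erase r
  have hsep : ∀ a ∈ C, ∀ b ∈ S \ C, G.Adj a b → b = r := by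
    intro a ha b hb hab
    by_contra hbr
    obtain ⟨-, wa, hwa⟩ := mem_filter.1 ha
    have hbS : b ∈ S.erase r := mem_erase.2 ⟨hbr, (mem_sdiff.1 hb).1⟩
    refine (mem_sdiff.1 hb).2 (mem_filter.2 ⟨hbS, .cons hab.symm wa, ?_⟩)
    simpa [hbr, (mem_sdiff.1 hb).1] using hwa
  refine ⟨C, u, mem_filter.2 ⟨huS, .nil, by simpa using huS⟩, filter_subset _ _, hur, hsep,
    fun x hx => ?_, fun x hx => ?_⟩
  · obtain ⟨-, wx, hwx⟩ := mem_filter.1 hx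
    refine ⟨wx, fun y hy => mem_filter.2 ⟨hwx y hy, wx.dropUntil y hy, fun z hz => ?_⟩⟩
    exact hwx z (wx.support_dropUntil_subset_support hy hz)
  · obtain ⟨w, hw⟩ := hS x (mem_sdiff.1 hx).1
    exact exists_walk_in_sdiff hsep w hw (mem_sdiff.1 hx).2

lemma KConn.exists_walk {k : ℕ} (hK : KConn G k) {s : Set V} (hs : s.Finite) (hsk : s.ncard < k)
    {a b : V} (ha : a ∉ s) (hb : b ∉ s) : ∃ w : G.Walk a b, ∀ y ∈ w.support, y ∉ s := by
  obtain ⟨w⟩ := (hK.2 s hs hsk).preconnected ⟨a, ha⟩ ⟨b, hb⟩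
  refine ⟨w.map (Embedding.induce sᶜ).toHom, fun y hy => ?_⟩
  change y ∈ (w.map (Embedding.induce sᶜ).toHom).support at hy
  rw [Walk.support_map] at hy
  obtain ⟨y, -, rfl⟩ := List.mem_map.1 hy
  exact y.2

section WalkDown

variable {v : ℕ → V} {h : ℕ} (hadj : ∀ j < h, G.Adj (v (j + 1)) (v j))

def walkDown : ∀ (p : ℕ) {q : ℕ}, q ≤ p → p ≤ h → G.Walk (v p) (v q)
  | 0, _, hq, _ => Walk.nil.copy rfl (by rw [Nat.le_zero.1 hq])
  | p + 1, q, hq, hp =>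
    if hqp : q = p + 1 then Walk.nil.copy rfl (by rw [hqp])
    else .cons (hadj p (by omega)) (walkDown p (by omega) (by omega))

lemma length_walkDown : ∀ (p : ℕ) {q : ℕ} (hq : q ≤ p) (hp : p ≤ h),
    (walkDown hadj p hq hp).length = p - q
  | 0, _, hq, _ => by simp [walkDown]
  | p + 1, q, hq, hp => by
    rw [walkDown]
    split_ifs with hqp
    · simp [hqp]
    · rw [Walk.length_cons, length_walkDown p]; omega

lemma mem_support_walkDown : ∀ (p : ℕ) {q : ℕ} (hq : q ≤ p) (hp : p ≤ h) {y : V},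
    y ∈ (walkDown hadj p hq hp).support → ∃ j, q ≤ j ∧ j ≤ p ∧ y = v j
  | 0, _, hq, _, y, hy => ⟨0, hq, le_rfl, by simpa [walkDown] using hy⟩
  | p + 1, q, hq, hp, y, hy => by
    rw [walkDown] at hy
    split_ifs at hy with hqp
    · exact ⟨p + 1, hq, le_rfl, by simpa using hy⟩
    · rw [Walk.support_cons, List.mem_cons] at hy
      rcases hy with rfl | hy
      · exact ⟨p + 1, hq, le_rfl, rfl⟩
      · obtain ⟨j, hqj, hjp, rfl⟩ := mem_support_walkDown p (by omega) (by omega) hy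
        exact ⟨j, hqj, by omega, rfl⟩

lemma isPath_walkDown (hinj : ∀ i ≤ h, ∀ j ≤ h, v i = v j → i = j) :
    ∀ (p : ℕ) {q : ℕ} (hq : q ≤ p) (hp : p ≤ h), (walkDown hadj p hq hp).IsPath
  | 0, _, hq, _ => by simp [walkDown]
  | p + 1, q, hq, hp => by
    rw [walkDown]
    split_ifs with hqp
    · simp
    · refine (Walk.cons_isPath_iff _ _).2 ⟨isPath_walkDown hinj p _ _, fun hmem => ?_⟩
      obtain ⟨j, -, hjp, hj⟩ := mem_support_walkDown hadj p _ _ hmem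
      have := hinj _ hp j (by omega) hj
      omega

end WalkDown

/-! ### Ear ladders -/

lemma sum_range_tsub_add_two {f : ℕ → ℕ} (hf : ∀ s, f (s + 2) ≤ f s) (n : ℕ) :
    ∑ s ∈ range n, (f s - f (s + 2)) + f n + f (n + 1) = f 0 + f 1 := by
  induction n with
  | zero => simp
  | succ n ih =>
    rw [sum_range_succ, show n + 1 + 1 = n + 2 from rfl]
    have := hf n
    omega

/-- Ears `0, …, k` along the path `v h, …, v 0`: ear `s` is a path from `v (m s)` down to
`v (c s)` meeting the path only at its ends, ears `s` and `s + 1` overlap, ears `s` and `s + 2`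
do not, and ear `0` is the edge `v h, v (h - 1)`. Beyond `k`, `c` and `m` vanish. -/
structure EarLadder (G : SimpleGraph V) (h k : ℕ) where
  v : ℕ → V
  c : ℕ → ℕ
  m : ℕ → ℕ
  ear : ∀ s, G.Walk (v (m s)) (v (c s))
  injOn : ∀ i ≤ h, ∀ j ≤ h, v i = v j → i = j
  adj : ∀ j < h, G.Adj (v (j + 1)) (v j)
  one_le : 1 ≤ k
  m_zero : m 0 = h
  c_zero : c 0 + 1 = h
  length_ear_zero : (ear 0).length = 1
  c_succ_lt : ∀ s < k, c (s + 1) < c s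
  c_lt_m_succ : ∀ s < k, c s < m (s + 1)
  m_add_two_le : ∀ s, m (s + 2) ≤ c s
  m_le : ∀ s, m s ≤ h
  c_eq_zero : ∀ s, k ≤ s → c s = 0
  m_eq_zero : ∀ s, k < s → m s = 0
  isPath_ear : ∀ s ≤ k, (ear s).IsPath
  ear_meet : ∀ s ≤ k, ∀ j ≤ h, v j ∈ (ear s).support → j = m s ∨ j = c s
  ear_disjoint : ∀ s ≤ k, ∀ s' ≤ k, s ≠ s' → ∀ y ∈ (ear s).support,
    y ∈ (ear s').support → ∃ j ≤ h, y = v j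

namespace EarLadder

variable {h k : ℕ} (L : EarLadder G h k)

lemma m_one : L.m 1 = h := by
  have h1 : L.c 0 < L.m 1 := L.c_lt_m_succ 0 L.one_le
  have := L.m_le 1; have := L.c_zero; omega

lemma c_lt_m {s : ℕ} (hs : s ≤ k) : L.c s < L.m s := by
  rcases s with _ | s
  · have := L.c_zero; have := L.m_zero; omega
  · have := L.c_succ_lt s hs; have := L.c_lt_m_succ s hs; omega

lemma c_succ_le (s : ℕ) : L.c (s + 1) ≤ L.c s := by
  rcases lt_or_ge s k with hs | hs
  · exact (L.c_succ_lt s hs).le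
  · rw [L.c_eq_zero (s + 1) (by omega)]; exact Nat.zero_le _

lemma c_le (s : ℕ) : L.c s ≤ h := by
  rcases le_or_gt s k with hs | hs
  · exact ((L.c_lt_m hs).trans_le (L.m_le s)).le
  · rw [L.c_eq_zero s hs.le]; exact Nat.zero_le _

lemma m_add_two_le_m (s : ℕ) : L.m (s + 2) ≤ L.m s := by
  rcases le_or_gt s k with hs | hs
  · exact (L.m_add_two_le s).trans (L.c_lt_m hs).le
  · rw [L.m_eq_zero (s + 2) (by omega)]; exact Nat.zero_le _

def seg (s : ℕ) : G.Walk (L.v (L.c s)) (L.v (L.m (s + 2))) :=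
  walkDown L.adj (L.c s) (L.m_add_two_le s) (L.c_le s)

lemma mem_seg {s : ℕ} {y : V} (hy : y ∈ (L.seg s).support) :
    ∃ j, L.m (s + 2) ≤ j ∧ j ≤ L.c s ∧ y = L.v j :=
  mem_support_walkDown _ _ _ _ hy

def chain (s : ℕ) : G.Walk (L.v (L.m s)) (L.v 0) :=
  if hs : s ≤ k then (L.ear s).append ((L.seg s).append (chain (s + 2)))
  else Walk.nil.copy (by rw [L.m_eq_zero s (by omega)]) rfl
termination_by k + 1 - s

lemma chain_of_le {s : ℕ} (hs : s ≤ k) :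
    L.chain s = (L.ear s).append ((L.seg s).append (L.chain (s + 2))) := by
  rw [chain, dif_pos hs]

lemma support_chain_of_lt {s : ℕ} (hs : k < s) : (L.chain s).support = [L.v 0] := by
  rw [chain, dif_neg (by omega)]; simp

lemma length_chain_of_lt {s : ℕ} (hs : k < s) : (L.chain s).length = 0 := by
  rw [chain, dif_neg (by omega)]; simp

lemma eq_m_or_le_c_of_mem_chain (s : ℕ) {j : ℕ} (hj : j ≤ h) (hmem : L.v j ∈ (L.chain s).support) :
    j = L.m s ∨ j ≤ L.c s := by
  by_cases hs : s ≤ k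
  · rw [L.chain_of_le hs, Walk.mem_support_append_iff, Walk.mem_support_append_iff] at hmem
    rcases hmem with hmem | hmem | hmem
    · exact (L.ear_meet s hs j hj hmem).imp id le_of_eq
    · obtain ⟨i, -, hi, hji⟩ := L.mem_seg hmem
      have := L.injOn j hj i (hi.trans (L.c_le s)) hji
      omega
    · have := L.m_add_two_le s; have := L.c_succ_le s
      have : L.c (s + 2) ≤ L.c (s + 1) := L.c_succ_le (s + 1)
      rcases eq_m_or_le_c_of_mem_chain (s + 2) hj hmem with h' | h' <;> omega
  · rw [L.support_chain_of_lt (by omega), List.mem_singleton] at hmem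
    left; rw [L.injOn j hj 0 (Nat.zero_le _) hmem, L.m_eq_zero s (by omega)]
termination_by k + 1 - s

lemma exists_ear_of_mem_chain (s : ℕ) {y : V} (hy : y ∈ (L.chain s).support)
    (hoff : ∀ j ≤ h, y ≠ L.v j) :
    ∃ i, s + 2 * i ≤ k ∧ y ∈ (L.ear (s + 2 * i)).support := by
  by_cases hs : s ≤ k
  · rw [L.chain_of_le hs, Walk.mem_support_append_iff, Walk.mem_support_append_iff] at hy
    rcases hy with hy | hy | hy
    · exact ⟨0, hs, hy⟩
    · obtain ⟨j, -, hj, rfl⟩ := L.mem_seg hy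
      exact absurd rfl (hoff j (hj.trans (L.c_le s)))
    · obtain ⟨i, hi, hy⟩ := exists_ear_of_mem_chain (s + 2) hy hoff
      exact ⟨i + 1, by omega, by rwa [show s + 2 * (i + 1) = s + 2 + 2 * i by ring]⟩
  · rw [L.support_chain_of_lt (by omega), List.mem_singleton] at hy
    exact absurd hy (hoff 0 (Nat.zero_le _))
termination_by k + 1 - s

lemma mem_path_of_mem_ear_of_mem_chain {s s' : ℕ} (hs : s ≤ k) (hne : ∀ i, s' + 2 * i ≠ s)
    {y : V} (hy : y ∈ (L.ear s).support) (hy' : y ∈ (L.chain s').support) :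
    ∃ j ≤ h, y = L.v j := by
  by_contra! hoff
  obtain ⟨i, hi, hyi⟩ := L.exists_ear_of_mem_chain s' hy' hoff
  obtain ⟨j, hj, rfl⟩ := L.ear_disjoint s hs _ hi (hne i).symm y hy hyi
  exact hoff j hj rfl

lemma isPath_chain (s : ℕ) : (L.chain s).IsPath := by
  by_cases hs : s ≤ k
  · have hcs := L.c_lt_m hs
    have hms := L.m_add_two_le s
    have hrest : ((L.seg s).append (L.chain (s + 2))).IsPath := by
      refine (isPath_walkDown _ L.injOn _ _ _).append (isPath_chain (s + 2)) fun y hy hy' => ?_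
      obtain ⟨j, hj1, hj2, rfl⟩ := L.mem_seg hy
      rcases L.eq_m_or_le_c_of_mem_chain (s + 2) (hj2.trans (L.c_le s)) hy' with h' | h'
      · rw [h']
      · by_cases hk : s + 2 ≤ k
        · have := L.c_lt_m hk; omega
        · have := L.c_eq_zero (s + 2) (by omega)
          rw [L.m_eq_zero (s + 2) (by omega), show j = 0 by omega]
    rw [L.chain_of_le hs]
    refine (L.isPath_ear s hs).append hrest fun y hy hy' => ?_
    rw [Walk.mem_support_append_iff] at hy'
    obtain ⟨j, hj, rfl⟩ : ∃ j ≤ h, y = L.v j := by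
      rcases hy' with hy' | hy'
      · obtain ⟨j, -, hj, rfl⟩ := L.mem_seg hy'; exact ⟨j, hj.trans (L.c_le s), rfl⟩
      · exact L.mem_path_of_mem_ear_of_mem_chain hs (fun i => by omega) hy hy'
    rcases L.ear_meet s hs j hj hy with rfl | rfl
    · exfalso
      rcases hy' with hy' | hy'
      · obtain ⟨i, -, hi, hji⟩ := L.mem_seg hy'
        have := L.injOn _ hj i (hi.trans (L.c_le s)) hji
        omega
      · have := L.c_succ_le s
        have : L.c (s + 2) ≤ L.c (s + 1) := L.c_succ_le (s + 1)
        rcases L.eq_m_or_le_c_of_mem_chain (s + 2) hj hy' with h' | h' <;> omega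
    · rfl
  · rw [chain, dif_neg hs]; simp
termination_by k + 1 - s

lemma eq_of_mem_chain_of_mem_chain_succ (s : ℕ) {y : V} (hy : y ∈ (L.chain s).support)
    (hy' : y ∈ (L.chain (s + 1)).support) : y = L.v 0 ∨ y = L.v (L.m s) := by
  by_cases hs : s < k
  · have hcm := L.c_lt_m_succ s hs
    have hcc := L.c_succ_lt s hs
    rw [L.chain_of_le hs.le, Walk.mem_support_append_iff, Walk.mem_support_append_iff] at hy
    rcases hy with hy | hy | hy
    · obtain ⟨j, hj, rfl⟩ :=
        L.mem_path_of_mem_ear_of_mem_chain hs.le (fun i => by omega) hy hy'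
      rcases L.ear_meet s hs.le j hj hy with rfl | rfl
      · exact Or.inr rfl
      · rcases L.eq_m_or_le_c_of_mem_chain (s + 1) hj hy' with h' | h' <;> omega
    · obtain ⟨j, hj1, hj2, rfl⟩ := L.mem_seg hy
      rcases L.eq_m_or_le_c_of_mem_chain (s + 1) (hj2.trans (L.c_le s)) hy' with h' | h'
      · omega
      · by_cases hk : s + 1 < k
        · have : L.c (s + 1) < L.m (s + 2) := L.c_lt_m_succ (s + 1) hk
          omega
        · have := L.c_eq_zero (s + 1) (by omega)
          exact Or.inl (by rw [show j = 0 by omega])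
    · rcases eq_of_mem_chain_of_mem_chain_succ (s + 1) hy' hy with h' | rfl
      · exact Or.inl h'
      · have := L.m_add_two_le s
        have : L.c (s + 2) ≤ L.c (s + 1) := L.c_succ_le (s + 1)
        rcases L.eq_m_or_le_c_of_mem_chain (s + 2) (L.m_le _) hy with h' | h' <;> omega
  · rw [L.support_chain_of_lt (by omega), List.mem_singleton] at hy'
    exact Or.inl hy'
termination_by k + 1 - s

lemma length_chain_of_le {s : ℕ} (hs : s ≤ k) : (L.chain s).length =
    (L.ear s).length + (L.c s - L.m (s + 2)) + (L.chain (s + 2)).length := by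
  rw [L.chain_of_le hs, Walk.length_append, Walk.length_append, seg, length_walkDown, add_assoc]

lemma length_chain_add (s : ℕ) : (L.chain s).length + (L.chain (s + 1)).length =
    ∑ j ∈ Ico s (k + 1), ((L.ear j).length + (L.c j - L.m (j + 2))) := by
  by_cases hs : s ≤ k
  · rw [L.length_chain_of_le hs, sum_eq_sum_Ico_succ_bot (by omega), ← length_chain_add (s + 1)]
    ring
  · rw [L.length_chain_of_lt (by omega), L.length_chain_of_lt (by omega),
      Ico_eq_empty (by omega), sum_empty, add_zero]
termination_by k + 1 - s

theorem hasCycleLen_sum :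
    HasCycleLen G (∑ s ∈ range (k + 1), ((L.ear s).length + (L.c s - L.m (s + 2)))) := by
  let q : G.Walk (L.v 0) (L.v (L.m 0)) :=
    (L.chain 1).reverse.copy rfl (by rw [L.m_one, L.m_zero])
  have hq : q.IsPath := by simpa [q] using (L.isPath_chain 1).reverse
  have hlen : 1 < (L.chain 0).length := by
    have hc0 : L.c 0 ≠ 0 := by have := L.c_succ_lt 0 L.one_le; omega
    have hne : L.v (L.c 0) ≠ L.v 0 := fun he => hc0 (L.injOn _ (L.c_le 0) 0 (Nat.zero_le _) he)
    have := Walk.not_nil_iff_lt_length.1 (Walk.not_nil_of_ne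
      (p := (L.seg 0).append (L.chain (0 + 2))) hne)
    rw [L.chain_of_le (Nat.zero_le _), Walk.length_append, L.length_ear_zero]
    omega
  refine ⟨_, (L.chain 0).append q, (L.isPath_chain 0).isCycle_append hq ?_ (Or.inl hlen), ?_⟩
  · intro y hy hy'
    have hy1 : y ∈ (L.chain 1).support := by simpa [q] using List.mem_of_mem_tail hy'
    rcases L.eq_of_mem_chain_of_mem_chain_succ 0 (List.mem_of_mem_tail hy) hy1 with h' | h'
    · exact hq.ne_start_of_mem_tail hy' h'
    · exact (L.isPath_chain 0).ne_start_of_mem_tail hy h'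
  · rw [Walk.length_append, Walk.length_copy, Walk.length_reverse, L.length_chain_add 0,
      range_eq_Ico]

theorem hasCycleLen_ear {s : ℕ} (hs1 : 1 ≤ s) (hs : s ≤ k) :
    HasCycleLen G ((L.ear s).length + (L.m s - L.c s)) := by
  have hcm : L.c s + 2 ≤ L.m s := by
    obtain ⟨s, rfl⟩ : ∃ s', s = s' + 1 := ⟨s - 1, by omega⟩
    have := L.c_succ_lt s hs; have := L.c_lt_m_succ s hs; omega
  let q := (walkDown L.adj (L.m s) (L.c_lt_m hs).le (L.m_le s)).reverse
  have hq : q.IsPath := (isPath_walkDown _ L.injOn _ _ _).reverse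
  refine ⟨_, (L.ear s).append q, (L.isPath_ear s hs).isCycle_append hq ?_ (Or.inr ?_), ?_⟩
  · intro y hy hy'
    have hy'' : y ∈ (walkDown L.adj (L.m s) (L.c_lt_m hs).le (L.m_le s)).support := by
      simpa [q] using List.mem_of_mem_tail hy'
    obtain ⟨j, -, hj, rfl⟩ := mem_support_walkDown _ _ _ _ hy''
    rcases L.ear_meet s hs j (hj.trans (L.m_le s)) (List.mem_of_mem_tail hy) with rfl | rfl
    · exact (L.isPath_ear s hs).ne_start_of_mem_tail hy rfl
    · exact hq.ne_start_of_mem_tail hy' rfl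
  · simp only [q, Walk.length_reverse, length_walkDown]; omega
  · simp only [q, Walk.length_append, Walk.length_reverse, length_walkDown]

lemma one_le_length_ear {s : ℕ} (hs : s ≤ k) : 1 ≤ (L.ear s).length := by
  have hne : L.v (L.m s) ≠ L.v (L.c s) := fun he =>
    (L.c_lt_m hs).ne' (L.injOn _ (L.m_le s) _ (L.c_le s) he)
  exact Walk.not_nil_iff_lt_length.1 (Walk.not_nil_of_ne hne)

lemma sum_tsub_add_tsub :
    ∑ s ∈ range (k + 1), ((L.m s - L.c s) + (L.c s - L.m (s + 2))) = 2 * h := by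
  have key := sum_range_tsub_add_two L.m_add_two_le_m (k + 1)
  rw [L.m_eq_zero (k + 1) (by omega), L.m_eq_zero (k + 1 + 1) (by omega), L.m_zero, L.m_one]
    at key
  calc _ = ∑ s ∈ range (k + 1), (L.m s - L.m (s + 2)) := sum_congr rfl fun s hs => by
          have := L.c_lt_m (Nat.lt_succ_iff.1 (mem_range.1 hs)); have := L.m_add_two_le s; omega
    _ = 2 * h := by omega

end EarLadder

/-- Adding up the cycles through single ears and the cycle through all ears, every edge of the
path is counted twice. -/
theorem EarLadder.two_mul_le {h k : ℕ} (L : EarLadder G h k) {t : ℕ}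
    (ht : ∀ n, HasCycleLen G n → n ≤ t) :
    2 * h ≤ t * (t - 2) + 2 := by
  set A := ∑ s ∈ range (k + 1), (L.ear s).length
  have hA : k + 1 ≤ A := by
    simpa using card_nsmul_le_sum (range (k + 1)) _ 1
      fun s hs => L.one_le_length_ear (Nat.lt_succ_iff.1 (mem_range.1 hs))
  have hB := ht _ L.hasCycleLen_sum
  have hAt : A ≤ t := (sum_le_sum fun s _ => Nat.le_add_right _ _).trans hB
  have hears : ∑ s ∈ range (k + 1), ((L.ear s).length + (L.m s - L.c s)) ≤ k * t + 2 := by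
    have h0 : (L.ear 0).length + (L.m 0 - L.c 0) = 2 := by
      have := L.c_zero; rw [L.length_ear_zero, L.m_zero]; omega
    have hs : ∑ s ∈ range k, ((L.ear (s + 1)).length + (L.m (s + 1) - L.c (s + 1))) ≤
        ∑ s ∈ range k, t :=
      sum_le_sum fun s hs => ht _ (L.hasCycleLen_ear (by omega) (mem_range.1 hs))
    rw [sum_const, card_range, smul_eq_mul] at hs
    rw [sum_range_succ']
    omega
  have hsum : 2 * A + 2 * h = ∑ s ∈ range (k + 1), ((L.ear s).length + (L.m s - L.c s)) +
      ∑ s ∈ range (k + 1), ((L.ear s).length + (L.c s - L.m (s + 2))) := by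
    rw [← L.sum_tsub_add_tsub]
    simp only [sum_add_distrib]
    ring
  obtain ⟨u, rfl⟩ : ∃ u, t = u + 2 := ⟨t - 2, by have := L.one_le; omega⟩
  have : (k + 1) * u ≤ (u + 2) * u := Nat.mul_le_mul_right _ (by omega)
  rw [Nat.add_sub_cancel]
  nlinarith

lemma le_div_two_mul_sub_one {n t : ℕ} (ht : 2 ≤ t) (h : 2 * n ≤ t * (t - 2) + 2) :
    n ≤ t / 2 * (t - 1) := by
  obtain ⟨a, rfl | rfl⟩ := Nat.even_or_odd' t
  · obtain ⟨b, rfl⟩ : ∃ b, a = b + 1 := ⟨a - 1, by omega⟩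
    rw [Nat.mul_div_cancel_left _ two_pos]
    rw [show 2 * (b + 1) - 2 = 2 * b by omega] at h
    rw [show 2 * (b + 1) - 1 = 2 * b + 1 by omega]
    nlinarith
  · obtain ⟨b, rfl⟩ : ∃ b, a = b + 1 := ⟨a - 1, by omega⟩
    rw [show (2 * (b + 1) + 1) / 2 = b + 1 by omega,
      show 2 * (b + 1) + 1 - 1 = 2 * (b + 1) by omega]
    rw [show 2 * (b + 1) + 1 - 2 = 2 * b + 1 by omega] at h
    nlinarith

/-! ### Normal trees -/

/-- A rooted spanning tree of `S` given by parent and depth functions, in which every edge of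
`G` inside `S` joins a vertex to one of its ancestors, together with a numbering of `S` in which
the descendants of every vertex form an interval (a depth-first search tree with its preorder). -/
structure NormalTree (G : SimpleGraph V) (S : Finset V) (r : V) where
  par : V → V
  dep : V → ℕ
  num : V → ℕ
  root_mem : r ∈ S
  par_mem : ∀ x ∈ S, par x ∈ S
  par_root : par r = r
  adj_par : ∀ x ∈ S, x ≠ r → G.Adj x (par x)
  dep_root : dep r = 0
  dep_par : ∀ x ∈ S, x ≠ r → dep x = dep (par x) + 1
  adj_comparable : ∀ x ∈ S, ∀ y ∈ S, G.Adj x y →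
    (∃ n, par^[n] y = x) ∨ ∃ n, par^[n] x = y
  num_lt : ∀ x ∈ S, num x < #S
  num_injOn : Set.InjOn num S
  num_interval : ∀ x ∈ S, ∀ a ∈ S, ∀ b ∈ S, ∀ c ∈ S, (∃ n, par^[n] a = x) →
    (∃ n, par^[n] b = x) → num a ≤ num c → num c ≤ num b → ∃ n, par^[n] c = x

namespace NormalTree

section Basic

variable {S : Finset V} {r : V} (T : NormalTree G S r)

/-- `T.Anc x y`: `x` is an ancestor of `y` (possibly `x = y`). -/
def Anc (x y : V) : Prop := ∃ n, T.par^[n] y = x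

lemma anc_refl (x : V) : T.Anc x x := ⟨0, rfl⟩

lemma anc_trans {a b c : V} (hab : T.Anc a b) (hbc : T.Anc b c) : T.Anc a c := by
  obtain ⟨n, rfl⟩ := hab; obtain ⟨m, rfl⟩ := hbc
  exact ⟨n + m, Function.iterate_add_apply _ n m c⟩

lemma iterate_mem {x : V} (hx : x ∈ S) (n : ℕ) : T.par^[n] x ∈ S := by
  induction n with
  | zero => exact hx
  | succ n ih => rw [Function.iterate_succ_apply']; exact T.par_mem _ ih

lemma anc_mem {x y : V} (hy : y ∈ S) (h : T.Anc x y) : x ∈ S := by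
  obtain ⟨n, rfl⟩ := h; exact T.iterate_mem hy n

lemma eq_root_of_dep_eq_zero {x : V} (hx : x ∈ S) (h : T.dep x = 0) : x = r := by
  by_contra hxr; have := T.dep_par x hx hxr; omega

lemma dep_iterate {x : V} (hx : x ∈ S) {n : ℕ} (hn : n ≤ T.dep x) :
    T.dep (T.par^[n] x) + n = T.dep x := by
  induction n with
  | zero => rfl
  | succ n ih =>
    have ih := ih (by omega)
    have hne : T.par^[n] x ≠ r := by rintro he; rw [he, T.dep_root] at ih; omega
    rw [Function.iterate_succ_apply']
    have := T.dep_par _ (T.iterate_mem hx n) hne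
    omega

lemma iterate_eq_root {x : V} (hx : x ∈ S) {n : ℕ} (hn : T.dep x ≤ n) : T.par^[n] x = r := by
  induction n generalizing x with
  | zero => exact T.eq_root_of_dep_eq_zero hx (Nat.le_zero.mp hn)
  | succ n ih =>
    by_cases hxr : x = r
    · subst hxr; exact Function.iterate_fixed T.par_root _
    · rw [Function.iterate_succ_apply]
      exact ih (T.par_mem x hx) (by have := T.dep_par x hx hxr; omega)

lemma root_anc {x : V} (hx : x ∈ S) : T.Anc r x := ⟨T.dep x, T.iterate_eq_root hx le_rfl⟩

lemma exists_iterate_of_anc {x y : V} (hy : y ∈ S) (h : T.Anc x y) :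
    ∃ n ≤ T.dep y, T.par^[n] y = x := by
  obtain ⟨n, rfl⟩ := h
  by_cases hn : n ≤ T.dep y
  · exact ⟨n, hn, rfl⟩
  · refine ⟨T.dep y, le_rfl, ?_⟩
    rw [T.iterate_eq_root hy le_rfl, T.iterate_eq_root hy (by omega)]

lemma dep_le_of_anc {x y : V} (hy : y ∈ S) (h : T.Anc x y) : T.dep x ≤ T.dep y := by
  obtain ⟨n, hn, rfl⟩ := T.exists_iterate_of_anc hy h
  have := T.dep_iterate hy hn; omega

lemma eq_of_anc_of_dep_eq {x y : V} (hy : y ∈ S) (h : T.Anc x y) (hd : T.dep x = T.dep y) :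
    x = y := by
  obtain ⟨n, hn, rfl⟩ := T.exists_iterate_of_anc hy h
  obtain rfl : n = 0 := by have := T.dep_iterate hy hn; omega
  rfl

lemma dep_lt_of_anc {x y : V} (hy : y ∈ S) (h : T.Anc x y) (hne : x ≠ y) :
    T.dep x < T.dep y :=
  (T.dep_le_of_anc hy h).lt_of_ne fun hd => hne (T.eq_of_anc_of_dep_eq hy h hd)

lemma anc_total {a b y : V} (hy : y ∈ S) (ha : T.Anc a y) (hb : T.Anc b y) :
    T.Anc a b ∨ T.Anc b a := by
  obtain ⟨n, -, rfl⟩ := T.exists_iterate_of_anc hy ha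
  obtain ⟨m, -, rfl⟩ := T.exists_iterate_of_anc hy hb
  rcases le_total n m with h | h
  · exact Or.inr ⟨m - n, by rw [← Function.iterate_add_apply, Nat.sub_add_cancel h]⟩
  · exact Or.inl ⟨n - m, by rw [← Function.iterate_add_apply, Nat.sub_add_cancel h]⟩

lemma anc_par_of_anc {a x : V} (hx : x ∈ S) (h : T.Anc a x) (hne : a ≠ x) :
    T.Anc a (T.par x) := by
  obtain ⟨n, -, rfl⟩ := T.exists_iterate_of_anc hx h
  cases n with
  | zero => exact absurd rfl hne
  | succ n => exact ⟨n, Function.iterate_succ_apply _ n x⟩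

end Basic

def single (r : V) : NormalTree G {r} r where
  par := id
  dep := fun _ => 0
  num := fun _ => 0
  root_mem := mem_singleton_self r
  par_mem := fun _ hx => hx
  par_root := rfl
  adj_par := fun _ hx hxr => absurd (mem_singleton.1 hx) hxr
  dep_root := rfl
  dep_par := fun _ hx hxr => absurd (mem_singleton.1 hx) hxr
  adj_comparable := by
    intro x hx y hy hxy
    rw [mem_singleton.1 hx, mem_singleton.1 hy] at hxy
    exact absurd hxy (G.irrefl)
  num_lt := by simp
  num_injOn := fun x hx y hy _ => (mem_singleton.1 hx).trans (mem_singleton.1 hy).symm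
  num_interval := fun x hx _ _ _ _ c hc _ _ _ _ =>
    ⟨0, (mem_singleton.1 hc).trans (mem_singleton.1 hx).symm⟩

section Glue

variable [DecidableEq V] {R C : Finset V} {r u : V} (tR : NormalTree G R r) (tC : NormalTree G C u)

def gluePar (x : V) : V := if x ∈ C then (if x = u then r else tC.par x) else tR.par x

def glueNum (x : V) : ℕ := if x ∈ C then #R + tC.num x else tR.num x

variable {tR tC}

lemma glueNum_injOn : Set.InjOn (glueNum tR tC) ↑(R ∪ C) := by
  intro x hx y hy hxy
  simp only [glueNum, coe_union, Set.mem_union, mem_coe] at hx hy hxy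
  by_cases hxC : x ∈ C <;> by_cases hyC : y ∈ C <;>
    simp only [hxC, hyC, if_true, if_false] at hxy
  · exact tC.num_injOn hxC hyC (by omega)
  · have := tR.num_lt y (hy.resolve_right hyC); omega
  · have := tR.num_lt x (hx.resolve_right hxC); omega
  · exact tR.num_injOn (hx.resolve_right hxC) (hy.resolve_right hyC) hxy

variable (hRC : Disjoint R C)
include hRC

lemma gluePar_iterate_of_mem_left {x : V} (hx : x ∈ R) (n : ℕ) :
    (gluePar tR tC)^[n] x = tR.par^[n] x := by
  induction n with
  | zero => rfl
  | succ n ih =>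
    have hC : tR.par^[n] x ∉ C := disjoint_left.1 hRC (tR.iterate_mem hx n)
    rw [Function.iterate_succ_apply', Function.iterate_succ_apply', ih, gluePar, if_neg hC]

lemma gluePar_iterate_of_mem_right {x : V} (hx : x ∈ C) (n : ℕ) :
    (gluePar tR tC)^[n] x = if n ≤ tC.dep x then tC.par^[n] x else r := by
  induction n with
  | zero => simp
  | succ n ih =>
    rw [Function.iterate_succ_apply', ih]
    have hrC : r ∉ C := disjoint_left.1 hRC tR.root_mem
    by_cases hn : n + 1 ≤ tC.dep x
    · have hdep := tC.dep_iterate hx (n := n) (by omega)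
      have hu : tC.par^[n] x ≠ u := by rintro he; rw [he, tC.dep_root] at hdep; omega
      rw [if_pos (by omega), if_pos hn, gluePar, if_pos (tC.iterate_mem hx n), if_neg hu,
        Function.iterate_succ_apply']
    · rw [if_neg hn, gluePar]
      by_cases hn' : n ≤ tC.dep x
      · rw [if_pos hn', tC.iterate_eq_root hx (by omega), if_pos tC.root_mem, if_pos rfl]
      · rw [if_neg hn', if_neg hrC, tR.par_root]

lemma gluePar_anc_of_mem_left {x y : V} (hy : y ∈ R) :
    (∃ n, (gluePar tR tC)^[n] y = x) ↔ tR.Anc x y := by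
  simp only [gluePar_iterate_of_mem_left hRC hy, Anc]

lemma gluePar_anc_of_mem_right {x y : V} (hy : y ∈ C) :
    (∃ n, (gluePar tR tC)^[n] y = x) ↔ tC.Anc x y ∨ x = r := by
  simp only [gluePar_iterate_of_mem_right hRC hy]
  constructor
  · rintro ⟨n, hn⟩
    split_ifs at hn
    · exact Or.inl ⟨n, hn⟩
    · exact Or.inr hn.symm
  · rintro (h | rfl)
    · obtain ⟨n, hn, rfl⟩ := tC.exists_iterate_of_anc hy h
      exact ⟨n, if_pos hn⟩
    · exact ⟨tC.dep y + 1, if_neg (by omega)⟩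

lemma gluePar_root_anc {y : V} (hy : y ∈ R ∪ C) : ∃ n, (gluePar tR tC)^[n] y = r := by
  by_cases hyC : y ∈ C
  · exact (gluePar_anc_of_mem_right hRC hyC).2 (Or.inr rfl)
  · exact (gluePar_anc_of_mem_left hRC ((mem_union.1 hy).resolve_right hyC)).2
      (tR.root_anc ((mem_union.1 hy).resolve_right hyC))

lemma gluePar_comparable (hsep : ∀ a ∈ C, ∀ b ∈ R, G.Adj a b → b = r) {x y : V}
    (hx : x ∈ R ∪ C) (hy : y ∈ R ∪ C) (hxy : G.Adj x y) :
    (∃ n, (gluePar tR tC)^[n] y = x) ∨ ∃ n, (gluePar tR tC)^[n] x = y := by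
  by_cases hxC : x ∈ C <;> by_cases hyC : y ∈ C
  · simp only [gluePar_anc_of_mem_right hRC hxC, gluePar_anc_of_mem_right hRC hyC]
    exact (tC.adj_comparable x hxC y hyC hxy).imp Or.inl Or.inl
  · obtain rfl := hsep x hxC y ((mem_union.1 hy).resolve_right hyC) hxy
    exact Or.inr (gluePar_root_anc hRC hx)
  · obtain rfl := hsep y hyC x ((mem_union.1 hx).resolve_right hxC) hxy.symm
    exact Or.inl (gluePar_root_anc hRC hy)
  · have hxR := (mem_union.1 hx).resolve_right hxC
    have hyR := (mem_union.1 hy).resolve_right hyC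
    simp only [gluePar_anc_of_mem_left hRC hxR, gluePar_anc_of_mem_left hRC hyR]
    exact tR.adj_comparable x hxR y hyR hxy

lemma glueNum_lt {x : V} (hx : x ∈ R ∪ C) : glueNum tR tC x < #(R ∪ C) := by
  rw [card_union_of_disjoint hRC, glueNum]
  by_cases hxC : x ∈ C
  · rw [if_pos hxC]; have := tC.num_lt x hxC; omega
  · rw [if_neg hxC]; have := tR.num_lt x ((mem_union.1 hx).resolve_right hxC); omega

lemma mem_right_of_gluePar_anc {x y : V} (hxC : x ∈ C) (hxr : x ≠ r) (hy : y ∈ R ∪ C)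
    (hyx : ∃ n, (gluePar tR tC)^[n] y = x) : y ∈ C ∧ tC.Anc x y := by
  by_cases hyC : y ∈ C
  · exact ⟨hyC, ((gluePar_anc_of_mem_right hRC hyC).1 hyx).resolve_right hxr⟩
  · have hyR := (mem_union.1 hy).resolve_right hyC
    exact absurd (tR.anc_mem hyR ((gluePar_anc_of_mem_left hRC hyR).1 hyx))
      (disjoint_right.1 hRC hxC)

lemma mem_left_of_gluePar_anc {x y : V} (hxC : x ∉ C) (hxr : x ≠ r) (hy : y ∈ R ∪ C)
    (hyx : ∃ n, (gluePar tR tC)^[n] y = x) : y ∈ R ∧ y ∉ C ∧ tR.Anc x y := by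
  by_cases hyC : y ∈ C
  · rcases (gluePar_anc_of_mem_right hRC hyC).1 hyx with h | h
    · exact absurd (tC.anc_mem hyC h) hxC
    · exact absurd h hxr
  · have hyR := (mem_union.1 hy).resolve_right hyC
    exact ⟨hyR, hyC, (gluePar_anc_of_mem_left hRC hyR).1 hyx⟩

lemma glueNum_interval {x a b c : V} (hx : x ∈ R ∪ C) (ha : a ∈ R ∪ C) (hb : b ∈ R ∪ C)
    (hc : c ∈ R ∪ C) (hxa : ∃ n, (gluePar tR tC)^[n] a = x)
    (hxb : ∃ n, (gluePar tR tC)^[n] b = x)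
    (hac : glueNum tR tC a ≤ glueNum tR tC c) (hcb : glueNum tR tC c ≤ glueNum tR tC b) :
    ∃ n, (gluePar tR tC)^[n] c = x := by
  by_cases hxr : x = r
  · subst hxr; exact gluePar_root_anc hRC hc
  unfold glueNum at hac hcb
  by_cases hxC : x ∈ C
  · obtain ⟨haC, hxa⟩ := mem_right_of_gluePar_anc hRC hxC hxr ha hxa
    obtain ⟨hbC, hxb⟩ := mem_right_of_gluePar_anc hRC hxC hxr hb hxb
    have hcC : c ∈ C := by
      by_contra hcC
      have := tR.num_lt c ((mem_union.1 hc).resolve_right hcC)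
      simp only [haC, hcC, if_true, if_false] at hac; omega
    simp only [haC, hbC, hcC, if_true] at hac hcb
    exact (gluePar_anc_of_mem_right hRC hcC).2
      (Or.inl (tC.num_interval x hxC a haC b hbC c hcC hxa hxb (by omega) (by omega)))
  · obtain ⟨haR, haC, hxa⟩ := mem_left_of_gluePar_anc hRC hxC hxr ha hxa
    obtain ⟨hbR, hbC, hxb⟩ := mem_left_of_gluePar_anc hRC hxC hxr hb hxb
    have hcC : c ∉ C := by
      intro hcC
      have := tR.num_lt b hbR
      simp only [hbC, hcC, if_true, if_false] at hcb; omega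
    have hcR := (mem_union.1 hc).resolve_right hcC
    have hxR := (mem_union.1 hx).resolve_right hxC
    simp only [haC, hbC, hcC, if_false] at hac hcb
    exact (gluePar_anc_of_mem_left hRC hcR).2
      (tR.num_interval x hxR a haR b hbR c hcR hxa hxb hac hcb)

/-- The tree obtained by hanging `tC` below the root of `tR` along the edge `u r`. -/
def glue (hur : G.Adj u r) (hsep : ∀ a ∈ C, ∀ b ∈ R, G.Adj a b → b = r) :
    NormalTree G (R ∪ C) r where
  par := gluePar tR tC
  dep x := if x ∈ C then tC.dep x + 1 else tR.dep x
  num := glueNum tR tC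
  root_mem := mem_union_left _ tR.root_mem
  par_mem x hx := by
    unfold gluePar
    by_cases hxC : x ∈ C
    · by_cases hxu : x = u
      · subst hxu; simp [hxC, tR.root_mem]
      · simp [hxC, hxu, tC.par_mem x hxC]
    · simp [hxC, tR.par_mem x ((mem_union.1 hx).resolve_right hxC)]
  par_root := by
    rw [gluePar, if_neg (disjoint_left.1 hRC tR.root_mem), tR.par_root]
  adj_par x hx hxr := by
    unfold gluePar
    by_cases hxC : x ∈ C
    · by_cases hxu : x = u
      · subst hxu; simpa [hxC] using hur
      · simpa [hxC, hxu] using tC.adj_par x hxC hxu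
    · simpa [hxC] using tR.adj_par x ((mem_union.1 hx).resolve_right hxC) hxr
  dep_root := by rw [if_neg (disjoint_left.1 hRC tR.root_mem), tR.dep_root]
  dep_par x hx hxr := by
    have hrC : r ∉ C := disjoint_left.1 hRC tR.root_mem
    unfold gluePar
    by_cases hxC : x ∈ C
    · by_cases hxu : x = u
      · subst hxu; simp [hxC, hrC, tC.dep_root, tR.dep_root]
      · simp [hxC, hxu, tC.par_mem x hxC, tC.dep_par x hxC hxu]
    · have hxR := (mem_union.1 hx).resolve_right hxC
      simp [hxC, disjoint_left.1 hRC (tR.par_mem x hxR), tR.dep_par x hxR hxr]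
  adj_comparable x hx y hy := gluePar_comparable hRC hsep hx hy
  num_lt x hx := glueNum_lt hRC hx
  num_injOn := glueNum_injOn
  num_interval x hx a ha b hb c hc := glueNum_interval hRC hx ha hb hc

end Glue

theorem nonempty [DecidableEq V] (S : Finset V) {r : V} (hr : r ∈ S)
    (hS : ∀ x ∈ S, ∃ w : G.Walk x r, ∀ y ∈ w.support, y ∈ S) :
    Nonempty (NormalTree G S r) := by
  induction hn : #S using Nat.strong_induction_on generalizing S r with
  | _ n ih =>
  by_cases hSr : S = {r}
  · subst hSr; exact ⟨single r⟩
  obtain ⟨x, hxS, hxr⟩ : ∃ x ∈ S, x ≠ r := by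
    by_contra! h; exact hSr (eq_singleton_iff_unique_mem.2 ⟨hr, h⟩)
  obtain ⟨C, u, huC, hCS, hur, hsep, hC, hR⟩ := exists_component hxS hxr hS
  have hrC : r ∉ C := fun h => (mem_erase.1 (hCS h)).1 rfl
  have hCS : C ⊆ S := hCS.trans (erase_subset _ _)
  have hcardC : #C < n := hn ▸ card_lt_card ((ssubset_iff_of_subset hCS).2 ⟨r, hr, hrC⟩)
  have hcardR : #(S \ C) < n :=
    hn ▸ card_lt_card ((ssubset_iff_of_subset sdiff_subset).2 ⟨u, hCS huC, by simp [huC]⟩)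
  obtain ⟨tC⟩ := ih _ hcardC C huC hC rfl
  obtain ⟨tR⟩ := ih _ hcardR (S \ C) (mem_sdiff.2 ⟨hr, hrC⟩) hR rfl
  rw [← sdiff_union_of_subset hCS]
  exact ⟨glue (tR := tR) (tC := tC) sdiff_disjoint hur hsep⟩

section Spanning

variable [Fintype V] {r : V} (T : NormalTree G univ r)

lemma card_anc_le (y : V) [DecidableEq V] [DecidablePred (T.Anc · y)] :
    #{x | T.Anc x y} ≤ T.dep y + 1 := by
  calc #{x | T.Anc x y} ≤ #((range (T.dep y + 1)).image fun n => T.par^[n] y) := by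
        refine card_le_card fun x hx => ?_
        obtain ⟨n, hn, rfl⟩ := T.exists_iterate_of_anc (mem_univ y) (mem_filter.1 hx).2
        exact mem_image_of_mem _ (mem_range.2 (by omega))
    _ ≤ T.dep y + 1 := card_image_le.trans (card_range _).le

/-- The bags are the ancestor sets of the vertices, in the order of the numbering. -/
theorem pwLE_of_dep_le {w : ℕ} (hw : ∀ x, T.dep x ≤ w) : pwLE G w := by
  classical
  have hinj : Function.Injective fun x => (⟨T.num x, by simpa using T.num_lt x (mem_univ x)⟩ :
      Fin (Fintype.card V)) :=
    fun x y hxy => T.num_injOn (mem_univ x) (mem_univ y) (congrArg Fin.val hxy)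
  let e : V ≃ Fin (Fintype.card V) :=
    Equiv.ofBijective _ ((Fintype.bijective_iff_injective_and_card _).2 ⟨hinj, by simp⟩)
  have hcard : Fintype.card V - 1 + 1 = Fintype.card V :=
    Nat.sub_add_cancel (Fintype.card_pos_iff.2 ⟨r⟩)
  let vert : Fin (Fintype.card V - 1 + 1) → V := fun i => e.symm (Fin.cast hcard i)
  have num_vert : ∀ i, T.num (vert i) = i := fun i =>
    congrArg Fin.val (e.apply_symm_apply (Fin.cast hcard i))
  have vert_num : ∀ x, ∃ i, vert i = x := fun x =>
    ⟨Fin.cast hcard.symm (e x), by simp [vert]⟩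
  have mem_bag : ∀ y i, y ∈ ({y | T.Anc y (vert i)} : Finset V) ↔ T.Anc y (vert i) := by simp
  refine ⟨⟨Fintype.card V - 1, fun i => {y | T.Anc y (vert i)}, ?_, ?_, ?_⟩, fun i => ?_⟩
  · intro a b hab
    rcases T.adj_comparable a (mem_univ a) b (mem_univ b) hab with h | h
    · obtain ⟨i, rfl⟩ := vert_num b
      exact ⟨i, (mem_bag _ _).2 h, (mem_bag _ _).2 (T.anc_refl _)⟩
    · obtain ⟨i, rfl⟩ := vert_num a
      exact ⟨i, (mem_bag _ _).2 (T.anc_refl _), (mem_bag _ _).2 h⟩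
  · intro x
    obtain ⟨i, rfl⟩ := vert_num x
    exact ⟨i, (mem_bag _ _).2 (T.anc_refl _)⟩
  · intro x i j k hij hjk hi hk
    rw [mem_bag] at hi hk ⊢
    exact T.num_interval x (mem_univ _) _ (mem_univ _) _ (mem_univ _) _ (mem_univ _) hi hk
      (by rw [num_vert, num_vert]; exact hij) (by rw [num_vert, num_vert]; exact hjk)
  · exact (T.card_anc_le _).trans (Nat.succ_le_succ (hw _))

/-- `T.rootPath x j` is the ancestor of `x` at depth `j ≤ T.dep x`. -/
def rootPath (x : V) (j : ℕ) : V := T.par^[T.dep x - j] x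

lemma anc_rootPath (x : V) (j : ℕ) : T.Anc (T.rootPath x j) x := ⟨_, rfl⟩

lemma dep_rootPath {x : V} {j : ℕ} (hj : j ≤ T.dep x) : T.dep (T.rootPath x j) = j := by
  have := T.dep_iterate (mem_univ x) (Nat.sub_le (T.dep x) j); rw [rootPath]; omega

lemma rootPath_dep (x : V) : T.rootPath x (T.dep x) = x := by simp [rootPath]

lemma rootPath_injOn {x : V} {i j : ℕ} (hi : i ≤ T.dep x) (hj : j ≤ T.dep x)
    (hij : T.rootPath x i = T.rootPath x j) : i = j := by
  rw [← T.dep_rootPath hi, ← T.dep_rootPath hj, hij]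

lemma anc_rootPath_rootPath {x : V} {i j : ℕ} (hij : i ≤ j) (hj : j ≤ T.dep x) :
    T.Anc (T.rootPath x i) (T.rootPath x j) :=
  ⟨j - i, by rw [rootPath, rootPath, ← Function.iterate_add_apply]; congr 1; omega⟩

lemma eq_rootPath_of_anc {a x : V} (h : T.Anc a x) : a = T.rootPath x (T.dep a) := by
  obtain ⟨n, hn, rfl⟩ := T.exists_iterate_of_anc (mem_univ x) h
  have := T.dep_iterate (mem_univ x) hn
  rw [rootPath]; congr 1; omega

lemma par_rootPath {x : V} {j : ℕ} (hj : j < T.dep x) :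
    T.par (T.rootPath x (j + 1)) = T.rootPath x j := by
  rw [rootPath, rootPath, ← Function.iterate_succ_apply' T.par]; congr 1; omega

lemma rootPath_ne_root {x : V} {j : ℕ} (hj : j ≤ T.dep x) (hj0 : j ≠ 0) :
    T.rootPath x j ≠ r := by
  rintro he; have := T.dep_rootPath hj; rw [he, T.dep_root] at this; omega

lemma adj_rootPath {x : V} {j : ℕ} (hj : j < T.dep x) :
    G.Adj (T.rootPath x (j + 1)) (T.rootPath x j) :=
  T.par_rootPath hj ▸ T.adj_par _ (mem_univ _) (T.rootPath_ne_root hj (by omega))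

lemma exists_path_down_adj {x b : V} {m : ℕ} (hm : m ≤ T.dep x) (hxb : G.Adj x b)
    (hb : ¬ T.Anc (T.rootPath x m) b) : ∃ w : G.Walk (T.rootPath x m) b, w.IsPath ∧
      ∀ y ∈ w.support, y = b ∨ (T.Anc (T.rootPath x m) y ∧ T.Anc y x) := by
  have hadj : ∀ j < T.dep x, G.Adj (T.rootPath x (j + 1)) (T.rootPath x j) :=
    fun j hj => T.adj_rootPath hj
  let w := (walkDown hadj (T.dep x) hm le_rfl).reverse.copy rfl (T.rootPath_dep x)
  have hw : ∀ y ∈ w.support, T.Anc (T.rootPath x m) y ∧ T.Anc y x := by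
    intro y hy
    obtain ⟨j, hmj, hj, rfl⟩ := mem_support_walkDown hadj _ _ _ (by simpa [w] using hy)
    exact ⟨T.anc_rootPath_rootPath hmj hj, T.anc_rootPath x j⟩
  refine ⟨w.concat (T.rootPath_dep x ▸ hxb), ?_, fun y hy => ?_⟩
  · refine Walk.IsPath.concat ?_ (fun hbw => hb (hw b hbw).1) _
    simpa [w] using (isPath_walkDown hadj (fun i hi j hj => T.rootPath_injOn hi hj) _ _ _).reverse
  · rw [Walk.support_concat, List.mem_append, List.mem_singleton] at hy
    exact hy.symm.imp id (hw y)

lemma eq_root_of_anc_root {x : V} (h : T.Anc x r) : x = r :=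
  T.eq_root_of_dep_eq_zero (mem_univ x)
    (Nat.le_zero.1 (T.dep_root ▸ T.dep_le_of_anc (mem_univ r) h))

/-- Otherwise `T.par x` would be a cut-vertex. -/
lemma exists_adj_anc_par (hK : KConn G 2) {x : V} (hpx : T.par x ≠ r) :
    ∃ a b, T.Anc x a ∧ T.Anc b (T.par x) ∧ b ≠ T.par x ∧ G.Adj a b := by
  have hxr : x ≠ r := by rintro rfl; exact hpx T.par_root
  have hxp : x ≠ T.par x := (T.adj_par x (mem_univ x) hxr).ne
  obtain ⟨w, hw⟩ := hK.exists_walk (Set.finite_singleton (T.par x)) (by simp)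
    (Set.mem_singleton_iff.not.2 hxp) (Set.mem_singleton_iff.not.2 (Ne.symm hpx))
  obtain ⟨d, hd, hda, hdb⟩ := w.exists_boundary_dart {y | T.Anc x y} (T.anc_refl x)
    fun h => hxr (T.eq_root_of_anc_root h)
  have hb := hw _ (w.dart_snd_mem_support_of_mem_darts hd)
  rcases T.adj_comparable _ (mem_univ _) _ (mem_univ _) d.adj with hab | hba
  · exact absurd (T.anc_trans hda hab) hdb
  · refine ⟨d.fst, d.snd, hda, ?_, hb, d.adj⟩
    have hbx : T.Anc d.snd x := (T.anc_total (mem_univ _) hba hda).resolve_right hdb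
    exact T.anc_par_of_anc (mem_univ x) hbx fun h => hdb (h ▸ T.anc_refl x)

lemma exists_two_le_dep (hK : KConn G 2) : ∃ z, 2 ≤ T.dep z := by
  classical
  by_contra! hdep
  have hcard : 1 < #(univ.erase r) := by
    have := hK.1; rw [Nat.card_eq_fintype_card] at this
    rw [card_erase_of_mem (mem_univ r), card_univ]; omega
  obtain ⟨x, hx, y, hy, hxy⟩ := one_lt_card.1 hcard
  obtain ⟨w, hw⟩ := hK.exists_walk (Set.finite_singleton r) (by simp)
    (Set.mem_singleton_iff.not.2 (mem_erase.1 hx).1)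
    (Set.mem_singleton_iff.not.2 (mem_erase.1 hy).1)
  have hwn : ¬ w.Nil := Walk.not_nil_of_ne hxy
  have hdep1 : ∀ a, a ≠ r → T.dep a = 1 := fun a ha => by
    have := T.dep_par a (mem_univ a) ha; have := hdep a; omega
  have hsnd : w.snd ≠ r := hw _ (w.getVert_mem_support 1)
  have hx1 := hdep1 x (mem_erase.1 hx).1
  have hs1 := hdep1 _ hsnd
  rcases T.adj_comparable _ (mem_univ _) _ (mem_univ _) (w.adj_snd hwn) with h | h
  · exact (w.adj_snd hwn).ne (T.eq_of_anc_of_dep_eq (mem_univ _) h (by omega))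
  · exact (w.adj_snd hwn).ne (T.eq_of_anc_of_dep_eq (mem_univ _) h (by omega)).symm

/-! ### Ears along a root path -/

section Ears

noncomputable def low (z : V) (i : ℕ) : ℕ :=
  sInf {j | ∃ a, T.Anc (T.rootPath z (i + 1)) a ∧ G.Adj a (T.rootPath z j)}

variable {T} {z : V}

lemma low_le_of_adj {i j : ℕ} {a : V} (ha : T.Anc (T.rootPath z (i + 1)) a)
    (hadj : G.Adj a (T.rootPath z j)) : T.low z i ≤ j :=
  by unfold low; exact Nat.sInf_le ⟨a, ha, hadj⟩

lemma exists_adj_low {i : ℕ} (hi : i < T.dep z) :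
    ∃ a, T.Anc (T.rootPath z (i + 1)) a ∧ G.Adj a (T.rootPath z (T.low z i)) := by
  unfold low
  exact Nat.sInf_mem (s := {j | ∃ a, T.Anc (T.rootPath z (i + 1)) a ∧ G.Adj a (T.rootPath z j)})
    ⟨i, _, T.anc_refl _, T.adj_rootPath hi⟩

lemma low_le {i : ℕ} (hi : i < T.dep z) : T.low z i ≤ i :=
  low_le_of_adj (T.anc_refl _) (T.adj_rootPath hi)

lemma low_lt (hK : KConn G 2) {i : ℕ} (hi1 : 1 ≤ i) (hi : i < T.dep z) : T.low z i < i := by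
  obtain ⟨a, b, ha, hb, hbne, hab⟩ := T.exists_adj_anc_par hK (x := T.rootPath z (i + 1))
    (by rw [T.par_rootPath hi]; exact T.rootPath_ne_root hi.le (by omega))
  rw [T.par_rootPath hi] at hb hbne
  have hdb : T.dep b < i := T.dep_rootPath hi.le ▸ T.dep_lt_of_anc (mem_univ _) hb hbne
  have hbz : b = T.rootPath z (T.dep b) :=
    T.eq_rootPath_of_anc (T.anc_trans hb (T.anc_rootPath z i))
  exact (low_le_of_adj ha (hbz ▸ hab)).trans_lt hdb

variable (T) (z)

/-- The lower ends of the ears. -/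
noncomputable def foot (s : ℕ) : ℕ := (T.low z)^[s] (T.dep z - 1)

noncomputable def numEars : ℕ := sInf {s | T.foot z s = 0}

variable {T} {z}

lemma foot_zero : T.foot z 0 = T.dep z - 1 := rfl

lemma foot_succ (s : ℕ) : T.foot z (s + 1) = T.low z (T.foot z s) :=
  Function.iterate_succ_apply' _ _ _

lemma foot_lt (hz : 1 ≤ T.dep z) (s : ℕ) : T.foot z s < T.dep z := by
  induction s with
  | zero => rw [foot, Function.iterate_zero_apply]; omega
  | succ s ih => rw [foot_succ]; exact (low_le ih).trans_lt ih

lemma foot_eq_zero_or (hK : KConn G 2) (hz : 1 ≤ T.dep z) (s : ℕ) :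
    T.foot z s = 0 ∨ T.foot z s + s < T.dep z := by
  induction s with
  | zero => rw [foot, Function.iterate_zero_apply]; omega
  | succ s ih =>
    rw [foot_succ]
    rcases Nat.eq_zero_or_pos (T.foot z s) with h0 | hpos
    · rw [h0]; exact Or.inl (Nat.le_zero.1 (low_le hz))
    · have := low_lt (T := T) (z := z) hK hpos (by omega); omega

lemma foot_numEars (hK : KConn G 2) (hz : 1 ≤ T.dep z) : T.foot z (T.numEars z) = 0 :=
  Nat.sInf_mem (s := {s | T.foot z s = 0})
    ⟨T.dep z, show T.foot z (T.dep z) = 0 by have := foot_eq_zero_or hK hz (T.dep z); omega⟩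

lemma one_le_foot {s : ℕ} (hs : s < T.numEars z) : 1 ≤ T.foot z s :=
  Nat.one_le_iff_ne_zero.2 (Nat.notMem_of_lt_sInf (s := {s | T.foot z s = 0}) hs)

lemma foot_succ_lt (hK : KConn G 2) (hz : 1 ≤ T.dep z) {s : ℕ} (hs : s < T.numEars z) :
    T.foot z (s + 1) < T.foot z s := by
  rw [foot_succ]; exact low_lt hK (one_le_foot hs) (foot_lt hz s)

lemma foot_eq_zero (hK : KConn G 2) (hz : 1 ≤ T.dep z) {s : ℕ} (hs : T.numEars z ≤ s) :
    T.foot z s = 0 := by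
  induction s, hs using Nat.le_induction with
  | base => exact foot_numEars hK hz
  | succ s _ ih => rw [foot_succ, ih]; exact Nat.le_zero.1 (low_le hz)

lemma one_le_numEars (hK : KConn G 2) (hz : 2 ≤ T.dep z) : 1 ≤ T.numEars z := by
  by_contra! h0
  have := foot_numEars hK (T := T) (z := z) (by omega)
  rw [Nat.lt_one_iff.1 h0, foot, Function.iterate_zero_apply] at this
  omega

lemma foot_antitone (hz : 1 ≤ T.dep z) : Antitone (T.foot z) :=
  antitone_nat_of_succ_le fun s => by rw [foot_succ]; exact low_le (foot_lt hz s)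

variable (T z) in
open scoped Classical in
/-- The upper ends of the ears; ear `0` is the top edge of the root path. -/
noncomputable def top (s : ℕ) : ℕ :=
  if s = 0 then T.dep z
  else if s ≤ T.numEars z then
    Nat.findGreatest (fun j => ∃ a, T.Anc (T.rootPath z j) a ∧
      T.Anc (T.rootPath z (T.foot z (s - 1) + 1)) a ∧ G.Adj a (T.rootPath z (T.foot z s)))
      (T.dep z)
  else 0

lemma top_zero : T.top z 0 = T.dep z := if_pos rfl

lemma top_of_lt {s : ℕ} (hs : T.numEars z < s) : T.top z s = 0 := by
  rw [top, if_neg (by omega), if_neg (by omega)]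

lemma top_le (s : ℕ) : T.top z s ≤ T.dep z := by
  classical
  unfold top; split_ifs
  exacts [le_rfl, Nat.findGreatest_le _, Nat.zero_le _]

lemma foot_lt_top_and_exists_adj (hz : 1 ≤ T.dep z) {s : ℕ} (hs : s < T.numEars z) :
    T.foot z s < T.top z (s + 1) ∧ ∃ a, T.Anc (T.rootPath z (T.top z (s + 1))) a ∧
      G.Adj a (T.rootPath z (T.foot z (s + 1))) ∧
      ∀ j ≤ T.dep z, T.Anc (T.rootPath z j) a → j ≤ T.top z (s + 1) := by
  classical
  have hfoot : T.foot z s < T.dep z := foot_lt hz s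
  obtain ⟨a, ha, hadj⟩ := exists_adj_low hfoot
  rw [← foot_succ] at hadj
  have hP : ∃ a', T.Anc (T.rootPath z (T.foot z s + 1)) a' ∧
      T.Anc (T.rootPath z (T.foot z s + 1)) a' ∧ G.Adj a' (T.rootPath z (T.foot z (s + 1))) :=
    ⟨a, ha, ha, hadj⟩
  rw [top, if_neg (by omega), if_pos (by omega : s + 1 ≤ T.numEars z), Nat.add_sub_cancel]
  have hfoot' : T.foot z s + 1 ≤ T.dep z := hfoot
  refine ⟨Nat.le_findGreatest hfoot' hP, ?_⟩
  obtain ⟨b, hb, hb', hbadj⟩ := Nat.findGreatest_spec (m := T.foot z s + 1)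
    (P := fun j => ∃ a', T.Anc (T.rootPath z j) a' ∧
      T.Anc (T.rootPath z (T.foot z s + 1)) a' ∧ G.Adj a' (T.rootPath z (T.foot z (s + 1))))
    hfoot' hP
  exact ⟨b, hb, hbadj, fun j hj hjb => Nat.le_findGreatest hj ⟨b, hjb, hb', hbadj⟩⟩

lemma top_le_foot (hK : KConn G 2) (hz : 1 ≤ T.dep z) {s : ℕ} (hs : s + 2 ≤ T.numEars z) :
    T.top z (s + 2) ≤ T.foot z s := by
  obtain ⟨-, a, ha, hadj, -⟩ := foot_lt_top_and_exists_adj hz (s := s + 1) (by omega)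
  by_contra! hlt
  have hanc : T.Anc (T.rootPath z (T.foot z s + 1)) a :=
    T.anc_trans (T.anc_rootPath_rootPath hlt (top_le _)) ha
  have := low_le_of_adj hanc hadj
  rw [← foot_succ] at this
  have := foot_succ_lt hK hz (s := s + 1) (by omega)
  omega

lemma exists_ear_succ (hK : KConn G 2) (hz : 1 ≤ T.dep z) {s : ℕ} (hs : s < T.numEars z) :
    ∃ w : G.Walk (T.rootPath z (T.top z (s + 1))) (T.rootPath z (T.foot z (s + 1))), w.IsPath ∧
      ∀ y ∈ w.support, y = T.rootPath z (T.foot z (s + 1)) ∨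
        (T.Anc (T.rootPath z (T.top z (s + 1))) y ∧
          ∀ j ≤ T.dep z, T.Anc (T.rootPath z j) y → j ≤ T.top z (s + 1)) := by
  obtain ⟨hlt, a, ha, hadj, hmax⟩ := foot_lt_top_and_exists_adj hz hs
  set m := T.top z (s + 1)
  have hm : T.dep (T.rootPath z m) = m := T.dep_rootPath (top_le _)
  have hma : m ≤ T.dep a := hm ▸ T.dep_le_of_anc (mem_univ a) ha
  have hva : T.rootPath a m = T.rootPath z m := by
    conv_rhs => rw [T.eq_rootPath_of_anc ha, hm]
  have hfoot : T.foot z (s + 1) < m := (foot_succ_lt hK hz hs).trans hlt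
  obtain ⟨w, hw, hsupp⟩ := T.exists_path_down_adj hma hadj fun h => by
    have := T.dep_le_of_anc (mem_univ _) (hva ▸ h)
    rw [hm, T.dep_rootPath (top_le _ |>.trans' hfoot.le)] at this
    omega
  refine ⟨w.copy hva rfl, by simpa using hw, fun y hy => ?_⟩
  rw [Walk.support_copy] at hy
  refine (hsupp y hy).imp id fun ⟨hmy, hya⟩ => ⟨hva ▸ hmy, fun j hj hjy => hmax j hj ?_⟩
  exact T.anc_trans hjy hya

variable (T z) in
/-- The vertices allowed on ear `s`: its two ends and, for `s ≥ 1`, the descendants of its upper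
end that branch off the root path of `z` there. -/
def EarVertex (s : ℕ) (y : V) : Prop :=
  y = T.rootPath z (T.foot z s) ∨ y = T.rootPath z (T.top z s) ∨
    (1 ≤ s ∧ T.Anc (T.rootPath z (T.top z s)) y ∧
      ∀ j ≤ T.dep z, T.Anc (T.rootPath z j) y → j ≤ T.top z s)

lemma exists_ear (hK : KConn G 2) (hz : 2 ≤ T.dep z) (s : ℕ) :
    ∃ w : G.Walk (T.rootPath z (T.top z s)) (T.rootPath z (T.foot z s)), s ≤ T.numEars z →
      w.IsPath ∧ (s = 0 → w.length = 1) ∧ ∀ y ∈ w.support, T.EarVertex z s y := by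
  rcases s with _ | s
  · have hadj := T.adj_rootPath (x := z) (j := T.dep z - 1) (by omega)
    rw [Nat.sub_add_cancel (by omega)] at hadj
    refine ⟨hadj.toWalk.copy (by rw [top_zero]) (by rw [foot_zero]),
      fun _ => ⟨by simp [hadj.ne], fun _ => by simp, fun y hy => ?_⟩⟩
    simp only [Walk.support_copy, Walk.support_cons, Walk.support_nil, List.mem_cons,
      List.not_mem_nil, or_false] at hy
    rw [EarVertex, top_zero, foot_zero]
    exact hy.symm.imp id Or.inl
  · by_cases hs : s < T.numEars z
    · obtain ⟨w, hw, hsupp⟩ := exists_ear_succ hK (by omega) hs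
      exact ⟨w, fun _ => ⟨hw, by simp, fun y hy =>
        (hsupp y hy).imp id fun h => Or.inr ⟨by omega, h⟩⟩⟩
    · exact ⟨Walk.nil.copy (by rw [top_of_lt (by omega)])
        (by rw [foot_eq_zero hK (by omega) (by omega)]), fun h => absurd h (by omega)⟩

lemma EarVertex.eq_top_or_eq_foot (hz : 1 ≤ T.dep z) {s j : ℕ} (hj : j ≤ T.dep z)
    (h : T.EarVertex z s (T.rootPath z j)) : j = T.top z s ∨ j = T.foot z s := by
  rcases h with h | h | ⟨-, h, h'⟩
  · exact Or.inr (T.rootPath_injOn hj (foot_lt hz s).le h)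
  · exact Or.inl (T.rootPath_injOn hj (top_le s) h)
  · have := T.dep_le_of_anc (mem_univ _) h
    rw [T.dep_rootPath (top_le s), T.dep_rootPath hj] at this
    exact Or.inl (le_antisymm (h' j hj (T.anc_refl _)) this)

/-- Off the root path, ears `s < s'` are disjoint: the upper end of ear `s'` lies above
`T.foot z (s' - 2)`, while ear `s` lies below `T.rootPath z (T.foot z (s' - 2) + 1)`. -/
lemma EarVertex.exists_eq_rootPath (hK : KConn G 2) (hz : 1 ≤ T.dep z) {s s' : ℕ}
    (hss' : s < s') (hs' : s' ≤ T.numEars z) {y : V} (h : T.EarVertex z s y)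
    (h' : T.EarVertex z s' y) :
    ∃ j ≤ T.dep z, y = T.rootPath z j := by
  rcases h with h | h | ⟨hs1, hanc, -⟩
  · exact ⟨_, (foot_lt hz s).le, h⟩
  · exact ⟨_, top_le s, h⟩
  rcases h' with h | h | ⟨-, -, hmax⟩
  · exact ⟨_, (foot_lt hz s').le, h⟩
  · exact ⟨_, top_le s', h⟩
  obtain ⟨s, rfl⟩ : ∃ a, s = a + 1 := ⟨s - 1, by omega⟩
  obtain ⟨t, rfl⟩ : ∃ b, s' = b + 2 := ⟨s' - 2, by omega⟩
  have h1 := foot_antitone hz (show s ≤ t by omega)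
  have h2 := (foot_lt_top_and_exists_adj hz (s := s) (by omega)).1
  have h3 := top_le_foot hK hz hs'
  have := hmax (T.foot z t + 1) (foot_lt hz t)
    (T.anc_trans (T.anc_rootPath_rootPath (by omega) (top_le _)) hanc)
  omega

theorem exists_earLadder (hK : KConn G 2) (hz : 2 ≤ T.dep z) :
    Nonempty (EarLadder G (T.dep z) (T.numEars z)) := by
  have hz1 : 1 ≤ T.dep z := by omega
  choose ear hear using exists_ear hK hz
  have ear_disjoint : ∀ s ≤ T.numEars z, ∀ s' ≤ T.numEars z, s < s' →
      ∀ y ∈ (ear s).support, y ∈ (ear s').support → ∃ j ≤ T.dep z, y = T.rootPath z j :=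
    fun s hs s' hs' hss' y hy hy' =>
      EarVertex.exists_eq_rootPath hK hz1 hss' hs' ((hear s hs).2.2 y hy) ((hear s' hs').2.2 y hy')
  exact ⟨{
    v := T.rootPath z
    c := T.foot z
    m := T.top z
    ear := ear
    injOn := fun i hi j hj => T.rootPath_injOn hi hj
    adj := fun j hj => T.adj_rootPath hj
    one_le := one_le_numEars hK hz
    m_zero := top_zero
    c_zero := by rw [foot_zero]; omega
    length_ear_zero := (hear 0 (Nat.zero_le _)).2.1 rfl
    c_succ_lt := fun s hs => foot_succ_lt hK hz1 hs
    c_lt_m_succ := fun s hs => (foot_lt_top_and_exists_adj hz1 hs).1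
    m_add_two_le := fun s => by
      by_cases hs : s + 2 ≤ T.numEars z
      · exact top_le_foot hK hz1 hs
      · rw [top_of_lt (by omega)]; exact Nat.zero_le _
    m_le := top_le
    c_eq_zero := fun s hs => foot_eq_zero hK hz1 hs
    m_eq_zero := fun s hs => top_of_lt hs
    isPath_ear := fun s hs => (hear s hs).1
    ear_meet := fun s hs j hj hmem => EarVertex.eq_top_or_eq_foot hz1 hj ((hear s hs).2.2 _ hmem)
    ear_disjoint := fun s hs s' hs' hne y hy hy' => by
      rcases lt_or_gt_of_ne hne with h | h
      · exact ear_disjoint s hs s' hs' h y hy hy'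
      · exact ear_disjoint s' hs' s hs h y hy' hy }⟩

end Ears

theorem dep_le_div_two_mul (hK : KConn G 2) {t : ℕ} (ht : ∀ n, HasCycleLen G n → n ≤ t)
    (x : V) : T.dep x ≤ t / 2 * (t - 1) := by
  have key : ∀ y, 2 * T.dep y ≤ t * (t - 2) + 2 := fun y => by
    by_cases hy : 2 ≤ T.dep y
    · obtain ⟨L⟩ := T.exists_earLadder hK hy
      exact L.two_mul_le ht
    · omega
  obtain ⟨z, hz⟩ := T.exists_two_le_dep hK
  have ht2 : 2 ≤ t := by
    have := key z
    by_contra! h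
    interval_cases t <;> omega
  exact le_div_two_mul_sub_one ht2 (key x)

end Spanning

end NormalTree

/-- Every 2-connected graph with circumference `t` has pathwidth
at most `⌊t/2⌋ * (t - 1)`. -/
theorem stmt0 {V : Type} [Fintype V] (G : SimpleGraph V) (t : ℕ)
    (h2 : KConn G 2) (hc : CircumEq G t) :
    pwLE G (t / 2 * (t - 1)) := by
  classical
  obtain ⟨r⟩ : Nonempty V := (Nat.card_pos_iff.1 (by have := h2.1; omega)).1
  obtain ⟨T⟩ := NormalTree.nonempty (G := G) univ (mem_univ r) fun x _ => by
    obtain ⟨w, -⟩ := h2.exists_walk Set.finite_empty (by simp) (Set.notMem_empty x)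
      (Set.notMem_empty r)
    exact ⟨w, fun _ _ => mem_univ _⟩
  exact T.pwLE_of_dep_le (T.dep_le_div_two_mul h2 hc.1)
end

section
/- The complete binary tree of height h has pathwidth exactly ⌈h/2⌉. -/
/-!
Upper bound: a path decomposition amounts to an assignment of intervals of integers to the
vertices such that adjacent vertices get intersecting intervals, the width being one less than
the largest number of intervals through a point. `CBT (h + 2)` consists of the root, its two
children and four copies of `CBT h`. Lay out the interval models of the four copies one after
another, let the interval of each child of the root span its two copies, and bridge the middle
by the interval of the root: this costs one more interval at every point. Odd heights follow
from `CBT h ⊆ CBT (h + 1)`.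

Lower bound: given a path decomposition of `CBT (h + 2)`, each of three copies of `CBT h` has a
bag containing at least `⌈h/2⌉ + 1` of its vertices. The middle one of these three bags also
meets the path through the root joining the other two copies, which avoids the middle copy.
-/

open SimpleGraph

universe u v

section Defs

variable {V : Type u} {W : Type v}

namespace PathDecomp

variable {G : SimpleGraph V}

noncomputable def comap {H : SimpleGraph W} (D : PathDecomp H) (f : G.Copy H) : PathDecomp G where
  n := D.n
  bag i := (D.bag i).preimage f f.injective.injOn
  cov_edge u v huv := by
    obtain ⟨i, hu, hv⟩ := D.cov_edge (f.toHom.map_adj huv)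
    exact ⟨i, Finset.mem_preimage.2 hu, Finset.mem_preimage.2 hv⟩
  cov_vert x := by
    obtain ⟨i, hx⟩ := D.cov_vert (f x)
    exact ⟨i, Finset.mem_preimage.2 hx⟩
  interval x i j k hij hjk hi hk := Finset.mem_preimage.2 <|
    D.interval (f x) i j k hij hjk (Finset.mem_preimage.1 hi) (Finset.mem_preimage.1 hk)

@[simp]
theorem mem_bag_comap {H : SimpleGraph W} (D : PathDecomp H) (f : G.Copy H)
    {i : Fin (D.n + 1)} {x : V} : x ∈ (D.comap f).bag i ↔ f x ∈ D.bag i :=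
  Finset.mem_preimage (hf := f.injective.injOn)

theorem card_bag_comap_le {H : SimpleGraph W} (D : PathDecomp H) (f : G.Copy H)
    (i : Fin (D.n + 1)) : ((D.comap f).bag i).card ≤ (D.bag i).card :=
  show ((D.bag i).preimage f f.injective.injOn).card ≤ _ from
  Finset.card_le_card_of_injOn f (fun _ hx => Finset.mem_preimage.1 hx) f.injective.injOn

theorem exists_mem_support_mem_bag (D : PathDecomp G) {x y : V} (p : G.Walk x y)
    {i j k : Fin (D.n + 1)} (hij : i ≤ j) (hjk : j ≤ k) (hx : x ∈ D.bag i) (hy : y ∈ D.bag k) :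
    ∃ z ∈ p.support, z ∈ D.bag j := by
  induction p generalizing i with
  | nil => exact ⟨_, Walk.start_mem_support _, D.interval _ i j k hij hjk hx hy⟩
  | @cons a b c hab p ih =>
    obtain ⟨i', ha, hb⟩ := D.cov_edge hab
    rcases le_or_gt j i' with hji' | hi'j
    · exact ⟨a, Walk.start_mem_support _, D.interval a i j i' hij hji' hx ha⟩
    · obtain ⟨z, hz, hzj⟩ := ih hi'j.le hb hy
      exact ⟨z, by simp [hz], hzj⟩

theorem card_lt_card_bag_of_walk (D : PathDecomp G) {x y : V} (p : G.Walk x y)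
    {i j k : Fin (D.n + 1)} (hij : i ≤ j) (hjk : j ≤ k) (hx : x ∈ D.bag i) (hy : y ∈ D.bag k)
    {S : Finset V} (hS : S ⊆ D.bag j) (hpS : ∀ z ∈ p.support, z ∉ S) :
    S.card < (D.bag j).card := by
  obtain ⟨z, hzp, hzj⟩ := D.exists_mem_support_mem_bag p hij hjk hx hy
  exact Finset.card_lt_card ((Finset.ssubset_iff_of_subset hS).2 ⟨z, hzj, hpS z hzp⟩)

end PathDecomp

theorem pwLE.of_copy {G : SimpleGraph V} {H : SimpleGraph W} {w : ℕ} (f : G.Copy H)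
    (hH : pwLE H w) : pwLE G w := by
  obtain ⟨D, hD⟩ := hH
  exact ⟨D.comap f, fun i => (D.card_bag_comap_le f i).trans (hD i)⟩

def intervalBag (lo hi : V → ℕ) (i : ℕ) : Set V := {x | lo x ≤ i ∧ i ≤ hi x}

/-- Vertex `x` gets the interval `[lo x, hi x]`; `lo_le_hi_of_adj`, applied in both directions,
says that adjacent vertices get intersecting intervals. -/
structure IsIntervalModel (G : SimpleGraph V) (lo hi : V → ℕ) (w : ℕ) : Prop where
  lo_le_hi : ∀ x, lo x ≤ hi x
  lo_le_hi_of_adj : ∀ ⦃x y⦄, G.Adj x y → lo x ≤ hi y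
  ncard_intervalBag_le : ∀ i, (intervalBag lo hi i).ncard ≤ w + 1

theorem IsIntervalModel.pwLE [Finite V] {G : SimpleGraph V} {lo hi : V → ℕ} {w : ℕ}
    (hM : IsIntervalModel G lo hi w) : pwLE G w := by
  obtain ⟨N, hN⟩ := (Set.finite_range hi).bddAbove
  have hhi x : hi x ≤ N := hN (Set.mem_range_self x)
  refine ⟨⟨N, fun i => (Set.toFinite (intervalBag lo hi i)).toFinset, ?_, ?_, ?_⟩, ?_⟩
  · intro u v huv
    have := hM.lo_le_hi_of_adj huv
    have := hM.lo_le_hi_of_adj huv.symm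
    have := hM.lo_le_hi u
    have := hM.lo_le_hi v
    refine ⟨⟨max (lo u) (lo v), by have := hhi u; omega⟩, ?_, ?_⟩ <;>
      simp only [Set.Finite.mem_toFinset, intervalBag, Set.mem_ofPred_eq] <;> omega
  · intro x
    refine ⟨⟨lo x, by have := hhi x; have := hM.lo_le_hi x; omega⟩, ?_⟩
    simpa [intervalBag] using hM.lo_le_hi x
  · intro x i j k hij hjk hi hk
    simp only [Set.Finite.mem_toFinset, intervalBag, Set.mem_ofPred_eq, Fin.le_def] at *
    omega
  · intro i
    rw [← Set.ncard_eq_toFinset_card]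
    exact hM.ncard_intervalBag_le i

instance (h : ℕ) : Finite (CBTVert h) := (List.finite_length_le Bool h).to_subtype

theorem List.eq_nil_or_eq_singleton_or_eq_append_pair {α : Type*} (l : List α) :
    l = [] ∨ (∃ a, l = [a]) ∨ ∃ l' a b, l = l' ++ [a, b] := by
  induction l with
  | nil => exact Or.inl rfl
  | cons x t ih =>
    rcases ih with rfl | ⟨a, rfl⟩ | ⟨l', a, b, rfl⟩
    · exact Or.inr (Or.inl ⟨x, rfl⟩)
    · exact Or.inr (Or.inr ⟨[], x, a, rfl⟩)
    · exact Or.inr (Or.inr ⟨x :: l', a, b, rfl⟩)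

namespace CBT

variable {h : ℕ}

def castSucc (h : ℕ) : (CBT h).Copy (CBT (h + 1)) where
  toHom := ⟨fun x => ⟨x.val, by omega⟩, id⟩
  injective' _ _ hxy := Subtype.ext (congrArg Subtype.val hxy :)

/-- The subtree of `CBT (h + 2)` below the depth-two vertex `[p.1, p.2]`. -/
def copy (h : ℕ) (p : Bool × Bool) : (CBT h).Copy (CBT (h + 2)) where
  toHom := ⟨fun x => ⟨x.val ++ [p.1, p.2], by simp; omega⟩, by
    rintro u v (⟨b, hb⟩ | ⟨b, hb⟩)
    · exact Or.inl ⟨b, by simp [hb]⟩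
    · exact Or.inr ⟨b, by simp [hb]⟩⟩
  injective' _ _ hxy := Subtype.ext (List.append_cancel_right (congrArg Subtype.val hxy))

@[simp]
theorem coe_copy (p : Bool × Bool) (y : CBTVert h) : (copy h p y).val = y.val ++ [p.1, p.2] :=
  rfl

theorem exists_walk_to_root (x : CBTVert h) :
    ∃ q : (CBT h).Walk x (CBTroot h), ∀ z ∈ q.support, z.val <:+ x.val := by
  obtain ⟨l, hl⟩ := x
  induction l with
  | nil => exact ⟨.nil, by simp [CBTroot]⟩
  | cons b l ih =>
    have hl' : l.length ≤ h := by simp at hl; omega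
    obtain ⟨q, hq⟩ := ih hl'
    have hadj : (CBT h).Adj ⟨b :: l, hl⟩ ⟨l, hl'⟩ := Or.inl ⟨b, rfl⟩
    refine ⟨.cons hadj q, ?_⟩
    intro z hz
    rw [Walk.support_cons, List.mem_cons] at hz
    rcases hz with rfl | hz
    · exact List.suffix_refl _
    · exact (hq z hz).trans (List.suffix_cons b l)

/-- Go through the root: every vertex on the way is a suffix of `x` or of `y`. -/
theorem exists_walk_avoiding_copy {p q m : Bool × Bool} (hpm : p ≠ m) (hqm : q ≠ m)
    {x y : CBTVert (h + 2)} (hx : x ∈ Set.range (copy h p)) (hy : y ∈ Set.range (copy h q)) :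
    ∃ r : (CBT (h + 2)).Walk x y, ∀ z ∈ r.support, z ∉ Set.range (copy h m) := by
  have key : ∀ {p : Bool × Bool} {x z : CBTVert (h + 2)}, p ≠ m → x ∈ Set.range (copy h p) →
      z.val <:+ x.val → z ∉ Set.range (copy h m) := by
    rintro p _ z hpm ⟨x, rfl⟩ hzx ⟨z, rfl⟩
    have hm : [m.1, m.2] <:+ x.val ++ [p.1, p.2] := (List.suffix_append _ _).trans hzx
    have := (List.suffix_of_suffix_length_le hm (List.suffix_append _ _) le_rfl).eq_of_length rfl
    simp only [List.cons.injEq, and_true] at this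
    exact hpm (Prod.ext this.1.symm this.2.symm)
  obtain ⟨rx, hrx⟩ := exists_walk_to_root x
  obtain ⟨ry, hry⟩ := exists_walk_to_root y
  refine ⟨rx.append ry.reverse, fun z hz => ?_⟩
  rw [Walk.mem_support_append_iff, Walk.support_reverse, List.mem_reverse] at hz
  exact hz.elim (fun hz => key hpm hx (hrx z hz)) (fun hz => key hqm hy (hry z hz))


theorem exists_large_bag_in_copy (D : PathDecomp (CBT (h + 2))) (p : Bool × Bool)
    (hlarge : ∀ D : PathDecomp (CBT h), ∃ i, (h + 1) / 2 < (D.bag i).card) :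
    ∃ (i : Fin (D.n + 1)) (S : Finset (CBTVert (h + 2))), S ⊆ D.bag i ∧
      (∀ z ∈ S, z ∈ Set.range (copy h p)) ∧ (h + 1) / 2 < S.card := by
  obtain ⟨i, hi⟩ := hlarge (D.comap (copy h p))
  refine ⟨i, ((D.comap (copy h p)).bag i).map (copy h p).toEmbedding, ?_, ?_, by simpa using hi⟩
  · intro z hz
    obtain ⟨x, hx, rfl⟩ := Finset.mem_map.1 hz
    exact (D.mem_bag_comap _).1 hx
  · intro z hz
    obtain ⟨x, -, rfl⟩ := Finset.mem_map.1 hz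
    exact ⟨x, rfl⟩

theorem exists_card_bag_gt : ∀ (h : ℕ) (D : PathDecomp (CBT h)), ∃ i, (h + 1) / 2 < (D.bag i).card
  | 0, D => by
    obtain ⟨i, hi⟩ := D.cov_vert (CBTroot 0)
    exact ⟨i, Finset.card_pos.2 ⟨_, hi⟩⟩
  | 1, D => by
    have hadj : (CBT 1).Adj ⟨[false], by simp⟩ (CBTroot 1) := Or.inl ⟨false, rfl⟩
    obtain ⟨i, h1, h2⟩ := D.cov_edge hadj
    exact ⟨i, Finset.one_lt_card.2 ⟨_, h1, _, h2, hadj.ne⟩⟩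
  | h + 2, D => by
    let sfx : Fin 3 → Bool × Bool := ![(false, false), (true, false), (false, true)]
    have hsfx : Function.Injective sfx := by decide
    choose i S hSi hScopy hScard using
      fun t => exists_large_bag_in_copy D (sfx t) (exists_card_bag_gt h)
    let σ := Tuple.sort i
    have hσ : Monotone (fun t => i (σ t)) := Tuple.monotone_sort i
    have hne : ∀ {a b : Fin 3}, a ≠ b → sfx (σ a) ≠ sfx (σ b) :=
      fun hab => hsfx.ne (σ.injective.ne hab)
    obtain ⟨x, hx⟩ : (S (σ 0)).Nonempty := Finset.card_pos.1 (by have := hScard (σ 0); omega)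
    obtain ⟨y, hy⟩ : (S (σ 2)).Nonempty := Finset.card_pos.1 (by have := hScard (σ 2); omega)
    obtain ⟨r, hr⟩ := exists_walk_avoiding_copy (hne (by decide : (0 : Fin 3) ≠ 1))
      (hne (by decide : (2 : Fin 3) ≠ 1)) (hScopy _ x hx) (hScopy _ y hy)
    have hlt := D.card_lt_card_bag_of_walk r (hσ (by decide : (0 : Fin 3) ≤ 1))
      (hσ (by decide : (1 : Fin 3) ≤ 2)) (hSi _ hx) (hSi _ hy) (hSi (σ 1))
      (fun z hz hzS => hr z hz (hScopy _ z hzS))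
    have := hScard (σ 1)
    dsimp only at hlt
    exact ⟨i (σ 1), by omega⟩


theorem eq_nil_or_eq_singleton_or_mem_range_copy (x : CBTVert (h + 2)) :
    x.val = [] ∨ (∃ d, x.val = [d]) ∨ ∃ p y, copy h p y = x := by
  rcases List.eq_nil_or_eq_singleton_or_eq_append_pair x.val with hx | hx | ⟨l, c, d, hx⟩
  · exact Or.inl hx
  · exact Or.inr (Or.inl hx)
  · have hl : l.length ≤ h := by have := x.2; rw [hx] at this; simpa using this
    exact Or.inr (Or.inr ⟨(c, d), ⟨l, hl⟩, Subtype.ext hx.symm⟩)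

/-- Start of the block of bags of `CBT (h + 2)` holding the copy below `[p.1, p.2]`, where `L`
bounds the number of bags for `CBT h`: first the two copies below `[false]`, then the bags
`{[false], []}` and `{[], [true]}`, then the two copies below `[true]`. -/
def copyOffset (L : ℕ) (p : Bool × Bool) : ℕ :=
  (if p.2 then 2 * L + 2 else 0) + (if p.1 then L else 0)

/-- Matching on `l.reverse` reads the bits of `l` from the root down. -/
def extendLo (L : ℕ) (lo : List Bool → ℕ) (l : List Bool) : ℕ :=
  match l.reverse with
  | [] => 2 * L
  | [d] => if d then 2 * L + 1 else 0
  | d :: c :: l' => copyOffset L (c, d) + lo l'.reverse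

def extendHi (L : ℕ) (hi : List Bool → ℕ) (l : List Bool) : ℕ :=
  match l.reverse with
  | [] => 2 * L + 1
  | [d] => if d then 4 * L + 1 else 2 * L
  | d :: c :: l' => copyOffset L (c, d) + hi l'.reverse

@[simp]
theorem extendLo_append_pair (L : ℕ) (lo : List Bool → ℕ) (l : List Bool) (c d : Bool) :
    extendLo L lo (l ++ [c, d]) = copyOffset L (c, d) + lo l := by
  simp [extendLo]

@[simp]
theorem extendHi_append_pair (L : ℕ) (hi : List Bool → ℕ) (l : List Bool) (c d : Bool) :
    extendHi L hi (l ++ [c, d]) = copyOffset L (c, d) + hi l := by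
  simp [extendHi]

variable {lo hi : List Bool → ℕ} {w L : ℕ}

theorem extendLo_le_extendHi
    (hM : IsIntervalModel (CBT h) (fun x => lo x.val) (fun x => hi x.val) w) (x : CBTVert (h + 2)) :
    extendLo L lo x.val ≤ extendHi L hi x.val := by
  rcases eq_nil_or_eq_singleton_or_mem_range_copy x with hx | ⟨d, hx⟩ | ⟨p, y, rfl⟩
  · simp [extendLo, extendHi, hx]
  · cases d <;> simp [extendLo, extendHi, hx]; omega
  · simpa using hM.lo_le_hi y

theorem extendLo_le_extendHi_of_parent
    (hM : IsIntervalModel (CBT h) (fun x => lo x.val) (fun x => hi x.val) w)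
    (hL : ∀ x : CBTVert h, hi x.val < L) {u v : CBTVert (h + 2)} {b : Bool}
    (huv : u.val = b :: v.val) :
    extendLo L lo u.val ≤ extendHi L hi v.val ∧ extendLo L lo v.val ≤ extendHi L hi u.val := by
  rcases eq_nil_or_eq_singleton_or_mem_range_copy v with hv | ⟨d, hv⟩ | ⟨p, y, rfl⟩
  · cases b <;> simp [extendLo, extendHi, huv, hv]; omega
  · have := hM.lo_le_hi (CBTroot h)
    have := hL (CBTroot h)
    cases b <;> cases d <;> simp [extendLo, extendHi, copyOffset, CBTroot, huv, hv] at * <;> omega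
  · have hy : (b :: y.val).length ≤ h := by
      have := u.2; simp [huv] at this; simpa using this
    have hu : u = copy h p ⟨b :: y.val, hy⟩ := Subtype.ext (by simp [huv])
    have hadj : (CBT h).Adj ⟨b :: y.val, hy⟩ y := Or.inl ⟨b, rfl⟩
    have h1 := hM.lo_le_hi_of_adj hadj
    have h2 := hM.lo_le_hi_of_adj hadj.symm
    simp only [hu, coe_copy, extendLo_append_pair, extendHi_append_pair] at h1 h2 ⊢
    omega

theorem intervalBag_extend_subset_of_mem_block (hL : ∀ x : CBTVert h, hi x.val < L)
    (p : Bool × Bool) {i : ℕ} (h1 : copyOffset L p ≤ i)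
    (h2 : p = (true, true) ∨ i < copyOffset L p + L) :
    intervalBag (fun x : CBTVert (h + 2) => extendLo L lo x.val) (fun x => extendHi L hi x.val) i ⊆
      insert ⟨[p.2], by simp⟩ (copy h p ''
        intervalBag (fun x => lo x.val) (fun x => hi x.val) (i - copyOffset L p)) := by
  rintro x ⟨hlo, hhi⟩
  rcases eq_nil_or_eq_singleton_or_mem_range_copy x with hx | ⟨d, hx⟩ | ⟨q, y, rfl⟩
  · rcases p with ⟨_ | _, _ | _⟩ <;> simp_all [extendLo, extendHi, copyOffset] <;> omega
  · by_cases hd : d = p.2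
    · exact Or.inl (Subtype.ext (by simp [hx, hd]))
    · rcases p with ⟨_ | _, _ | _⟩ <;> cases d <;> simp_all [extendLo, extendHi, copyOffset] <;>
        omega
  · simp only [coe_copy, extendLo_append_pair, extendHi_append_pair, Prod.mk.eta] at hlo hhi
    by_cases hq : q = p
    · subst hq
      exact Or.inr ⟨y, show lo y.val ≤ _ ∧ _ ≤ hi y.val from ⟨by omega, by omega⟩, rfl⟩
    · have := hL y
      rcases p with ⟨_ | _, _ | _⟩ <;> rcases q with ⟨_ | _, _ | _⟩ <;>
        simp_all [copyOffset] <;> omega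

theorem intervalBag_extend_subset_of_mem_middle (hL : ∀ x : CBTVert h, hi x.val < L) (d : Bool)
    {i : ℕ} (hid : i = 2 * L + d.toNat) :
    intervalBag (fun x : CBTVert (h + 2) => extendLo L lo x.val) (fun x => extendHi L hi x.val) i ⊆
      {⟨[d], by simp⟩, CBTroot (h + 2)} := by
  rintro x ⟨hlo, hhi⟩
  rcases eq_nil_or_eq_singleton_or_mem_range_copy x with hx | ⟨d', hx⟩ | ⟨q, y, rfl⟩
  · exact Or.inr (Subtype.ext hx)
  · by_cases hd : d' = d
    · exact Or.inl (Subtype.ext (by simp [hx, hd]))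
    · cases d <;> cases d' <;> simp_all [extendLo, extendHi]
  · have := hL y
    rcases q with ⟨_ | _, _ | _⟩ <;> cases d <;>
      simp_all [extendLo_append_pair, extendHi_append_pair, copyOffset] <;> omega

theorem isIntervalModel_extend
    (hM : IsIntervalModel (CBT h) (fun x => lo x.val) (fun x => hi x.val) w)
    (hL : ∀ x : CBTVert h, hi x.val < L) :
    IsIntervalModel (CBT (h + 2)) (fun x => extendLo L lo x.val) (fun x => extendHi L hi x.val)
      (w + 1) where
  lo_le_hi := extendLo_le_extendHi hM
  lo_le_hi_of_adj := by
    rintro u v (⟨b, huv⟩ | ⟨b, hvu⟩)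
    · exact (extendLo_le_extendHi_of_parent hM hL huv).1
    · exact (extendLo_le_extendHi_of_parent hM hL hvu).2
  ncard_intervalBag_le i := by
    set B := intervalBag (fun x : CBTVert (h + 2) => extendLo L lo x.val)
      (fun x => extendHi L hi x.val) i
    suffices ∃ t T, T.ncard ≤ w + 1 ∧ B ⊆ insert t T by
      obtain ⟨t, T, hT, hsub⟩ := this
      exact (Set.ncard_le_ncard hsub).trans ((Set.ncard_insert_le t T).trans (by omega))
    have hblock (p : Bool × Bool) (h1 : copyOffset L p ≤ i)
        (h2 : p = (true, true) ∨ i < copyOffset L p + L) :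
        ∃ t T, T.ncard ≤ w + 1 ∧ B ⊆ insert t T :=
      ⟨_, _, (Set.ncard_image_of_injective _ (copy h p).injective).trans_le
        (hM.ncard_intervalBag_le _), intervalBag_extend_subset_of_mem_block hL p h1 h2⟩
    have hmiddle (d : Bool) (hd : i = 2 * L + d.toNat) :
        ∃ t T, T.ncard ≤ w + 1 ∧ B ⊆ insert t T :=
      ⟨⟨[d], by simp⟩, {CBTroot (h + 2)}, by simp, intervalBag_extend_subset_of_mem_middle hL d hd⟩
    rcases (by omega : i < L ∨ L ≤ i ∧ i < 2 * L ∨ i = 2 * L ∨ i = 2 * L + 1 ∨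
      2 * L + 2 ≤ i ∧ i < 3 * L + 2 ∨ 3 * L + 2 ≤ i) with
      hrange | hrange | hrange | hrange | hrange | hrange
    · exact hblock (false, false) (by simp [copyOffset]) (by simp [copyOffset, hrange])
    · exact hblock (true, false) (by simp [copyOffset]; omega) (by simp [copyOffset]; omega)
    · exact hmiddle false (by simp [hrange])
    · exact hmiddle true (by simp [hrange])
    · exact hblock (false, true) (by simp [copyOffset]; omega) (by simp [copyOffset]; omega)
    · exact hblock (true, true) (by simp [copyOffset]; omega) (Or.inl rfl)

theorem exists_isIntervalModel_two_mul (k : ℕ) : ∃ lo hi : List Bool → ℕ,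
    IsIntervalModel (CBT (2 * k)) (fun x => lo x.val) (fun x => hi x.val) k := by
  induction k with
  | zero =>
    refine ⟨fun _ => 0, fun _ => 0, fun _ => le_rfl, fun _ _ _ => le_rfl, fun i => ?_⟩
    have : Subsingleton (CBTVert (2 * 0)) :=
      ⟨fun x y => Subtype.ext (by rw [List.eq_nil_of_length_eq_zero (Nat.le_zero.1 x.2),
        List.eq_nil_of_length_eq_zero (Nat.le_zero.1 y.2)])⟩
    exact Set.ncard_le_one_of_subsingleton _
  | succ k ih =>
    obtain ⟨lo, hi, hM⟩ := ih
    obtain ⟨L, hL⟩ := (Set.finite_range fun x : CBTVert (2 * k) => hi x.val).bddAbove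
    exact ⟨_, _, isIntervalModel_extend (L := L + 1) hM
      fun x => Nat.lt_succ_of_le (hL (Set.mem_range_self x))⟩

end CBT

theorem pwLE_CBT (h : ℕ) : pwLE (CBT h) ((h + 1) / 2) := by
  obtain ⟨k, rfl | rfl⟩ := Nat.even_or_odd' h
  · obtain ⟨lo, hi, hM⟩ := CBT.exists_isIntervalModel_two_mul k
    have : (2 * k + 1) / 2 = k := by omega
    rw [this]
    exact hM.pwLE
  · obtain ⟨lo, hi, hM⟩ := CBT.exists_isIntervalModel_two_mul (k + 1)
    have : (2 * k + 1 + 1) / 2 = k + 1 := by omega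
    rw [this]
    exact hM.pwLE.of_copy (CBT.castSucc (2 * k + 1))

/-- The complete binary tree of height `h` has pathwidth exactly
`⌈h/2⌉`. -/
theorem stmt4 (h : ℕ) :
    pwLE (CBT h) ((h + 1) / 2) ∧ ∀ w, pwLE (CBT h) w → (h + 1) / 2 ≤ w := by
  refine ⟨pwLE_CBT h, fun w ⟨D, hD⟩ => ?_⟩
  obtain ⟨i, hi⟩ := CBT.exists_card_bag_gt h D
  have := hD i
  omega
end Defs
end

section
/- Let T be a tree, v a vertex of T with neighbors w_1,…,w_d, and T_i the component of T−v containing w_i. Define the rooted pathwidth rpw(T,v) as the minimum width of a path decomposition of T in which v belongs to the last bag. If r_1 ≥ r_2 ≥ … ≥ r_d are the values rpw(T_i,w_i) sorted in decreasing order, then rpw(T,v) ≤ max{r_1, r_2 + 1}. -/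
open SimpleGraph

universe u v

section Defs

variable {V : Type u} {W : Type v}

/-- The vertex set of the component of `T - v` containing `u`. -/
def CompOf {V : Type u} (T : SimpleGraph V) (v u : V) : Set V :=
  {x | ∃ (hx : x ≠ v) (hu : u ≠ v),
    (T.induce {y : V | y ≠ v}).Reachable ⟨u, hu⟩ ⟨x, hx⟩}

/-!
Let `A` be the component of `T - v` containing `w 0` and `B` the union of the others.
Follow a decomposition of `T[A]` of width `r 0` whose last bag contains `w 0` by the bag
`{w 0, v}`, and then by the concatenated decompositions of the other components (each of
width at most `r 1`) with `v` added to every bag. Since `T` is a tree, `v` sees `A` only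
through `w 0` and distinct components are disjoint and nonadjacent, so every vertex occupies
an interval of bags: this is a path decomposition of width `max (r 0) (r 1 + 1)` whose
last bag contains `v`.
-/

open Finset

section PathDecompOn

variable {G : SimpleGraph V}

/-- Only `bag 0, …, bag (n - 1)` count; unlike `PathDecomp`, the empty sequence `n = 0` is
allowed. -/
structure IsPathDecompOn (G : SimpleGraph V) (S : Set V) (n : ℕ) (bag : ℕ → Finset V) :
    Prop where
  subset : ∀ i < n, ↑(bag i) ⊆ S
  exists_mem : ∀ x ∈ S, ∃ i < n, x ∈ bag i
  exists_mem_of_adj : ∀ x ∈ S, ∀ y ∈ S, G.Adj x y → ∃ i < n, x ∈ bag i ∧ y ∈ bag i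
  mem_of_le_of_le : ∀ x i j k, i ≤ j → j ≤ k → k < n → x ∈ bag i → x ∈ bag k → x ∈ bag j

theorem isPathDecompOn_empty (bag : ℕ → Finset V) : IsPathDecompOn G ∅ 0 bag where
  subset _ h := absurd h (Nat.not_lt_zero _)
  exists_mem _ h := h.elim
  exists_mem_of_adj _ h := h.elim
  mem_of_le_of_le _ _ _ _ _ _ h := absurd h (Nat.not_lt_zero _)

theorem isPathDecompOn_const (B : Finset V) : IsPathDecompOn G B 1 fun _ ↦ B where
  subset _ _ := subset_rfl
  exists_mem _ hx := ⟨0, one_pos, hx⟩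
  exists_mem_of_adj _ hx _ hy _ := ⟨0, one_pos, hx, hy⟩
  mem_of_le_of_le _ _ _ _ _ _ _ _ h := h

theorem IsPathDecompOn.insert [DecidableEq V] {S : Set V} {n : ℕ} {bag : ℕ → Finset V}
    (h : IsPathDecompOn G S n bag) (hn : 0 < n) (v : V) :
    IsPathDecompOn G (insert v S) n fun i ↦ insert v (bag i) where
  subset i hi := by
    rw [Finset.coe_insert]
    exact Set.insert_subset_insert (h.subset i hi)
  exists_mem x hx := by
    obtain rfl | hx := hx
    · exact ⟨0, hn, Finset.mem_insert_self _ _⟩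
    · obtain ⟨i, hi, hxi⟩ := h.exists_mem x hx
      exact ⟨i, hi, Finset.mem_insert_of_mem hxi⟩
  exists_mem_of_adj x hx y hy hxy := by
    obtain rfl | hx := hx
    · obtain ⟨i, hi, hyi⟩ := h.exists_mem y (hy.resolve_left hxy.ne')
      exact ⟨i, hi, Finset.mem_insert_self _ _, Finset.mem_insert_of_mem hyi⟩
    obtain rfl | hy := hy
    · obtain ⟨i, hi, hxi⟩ := h.exists_mem x hx
      exact ⟨i, hi, Finset.mem_insert_of_mem hxi, Finset.mem_insert_self _ _⟩
    obtain ⟨i, hi, hxi, hyi⟩ := h.exists_mem_of_adj x hx y hy hxy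
    exact ⟨i, hi, Finset.mem_insert_of_mem hxi, Finset.mem_insert_of_mem hyi⟩
  mem_of_le_of_le x i j k hij hjk hk hxi hxk := by
    obtain rfl | hxi := Finset.mem_insert.1 hxi
    · exact Finset.mem_insert_self _ _
    obtain rfl | hxk := Finset.mem_insert.1 hxk
    · exact Finset.mem_insert_self _ _
    exact Finset.mem_insert_of_mem (h.mem_of_le_of_le x i j k hij hjk hk hxi hxk)

def concatBags (n : ℕ) (bag₁ bag₂ : ℕ → Finset V) (i : ℕ) : Finset V :=
  if i < n then bag₁ i else bag₂ (i - n)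

section concatBags

variable {n i : ℕ} {bag₁ bag₂ : ℕ → Finset V}

theorem concatBags_of_lt (h : i < n) : concatBags n bag₁ bag₂ i = bag₁ i := if_pos h

theorem concatBags_of_le (h : n ≤ i) : concatBags n bag₁ bag₂ i = bag₂ (i - n) :=
  if_neg (Nat.not_lt.2 h)

theorem concatBags_add (i : ℕ) : concatBags n bag₁ bag₂ (n + i) = bag₂ i := by
  rw [concatBags_of_le (Nat.le_add_right n i), Nat.add_sub_cancel_left]

theorem card_concatBags_le {m a : ℕ} (h₁ : ∀ i < n, #(bag₁ i) ≤ a) (h₂ : ∀ i < m, #(bag₂ i) ≤ a) :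
    ∀ i < n + m, #(concatBags n bag₁ bag₂ i) ≤ a := by
  intro i hi
  rcases Nat.lt_or_ge i n with hin | hin
  · rw [concatBags_of_lt hin]; exact h₁ i hin
  · rw [concatBags_of_le hin]; exact h₂ _ (by omega)

end concatBags

theorem IsPathDecompOn.mem_concatBags_of_le_of_le {S₁ S₂ : Set V} {n₁ n₂ : ℕ}
    {bag₁ bag₂ : ℕ → Finset V} (h₁ : IsPathDecompOn G S₁ n₁ bag₁)
    (h₂ : IsPathDecompOn G S₂ n₂ bag₂) (hsep : ∀ x ∈ S₁ ∩ S₂, x ∈ bag₁ (n₁ - 1) ∧ x ∈ bag₂ 0)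
    {x : V} {i j k : ℕ} (hij : i ≤ j) (hjk : j ≤ k) (hk : k < n₁ + n₂)
    (hxi : x ∈ concatBags n₁ bag₁ bag₂ i) (hxk : x ∈ concatBags n₁ bag₁ bag₂ k) :
    x ∈ concatBags n₁ bag₁ bag₂ j := by
  rcases Nat.lt_or_ge k n₁ with hkn | hkn
  · rw [concatBags_of_lt (by omega)] at hxi ⊢
    rw [concatBags_of_lt hkn] at hxk
    exact h₁.mem_of_le_of_le x i j k hij hjk hkn hxi hxk
  rw [concatBags_of_le hkn] at hxk
  rcases Nat.lt_or_ge i n₁ with hin | hin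
  · rw [concatBags_of_lt hin] at hxi
    obtain ⟨hx₁, hx₂⟩ := hsep x ⟨h₁.subset i hin hxi, h₂.subset _ (by omega) hxk⟩
    rcases Nat.lt_or_ge j n₁ with hjn | hjn
    · rw [concatBags_of_lt hjn]
      exact h₁.mem_of_le_of_le x i j (n₁ - 1) hij (by omega) (by omega) hxi hx₁
    · rw [concatBags_of_le hjn]
      exact h₂.mem_of_le_of_le x 0 (j - n₁) (k - n₁) (Nat.zero_le _) (by omega) (by omega)
        hx₂ hxk
  · rw [concatBags_of_le hin] at hxi
    rw [concatBags_of_le (by omega)]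
    exact h₂.mem_of_le_of_le x (i - n₁) (j - n₁) (k - n₁) (by omega) (by omega) (by omega)
      hxi hxk

theorem IsPathDecompOn.concat {S₁ S₂ : Set V} {n₁ n₂ : ℕ} {bag₁ bag₂ : ℕ → Finset V}
    (h₁ : IsPathDecompOn G S₁ n₁ bag₁) (h₂ : IsPathDecompOn G S₂ n₂ bag₂)
    (hsep : ∀ x ∈ S₁ ∩ S₂, x ∈ bag₁ (n₁ - 1) ∧ x ∈ bag₂ 0)
    (hcross : ∀ x ∈ S₁ \ S₂, ∀ y ∈ S₂ \ S₁, ¬ G.Adj x y) :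
    IsPathDecompOn G (S₁ ∪ S₂) (n₁ + n₂) (concatBags n₁ bag₁ bag₂) := by
  refine ⟨fun i hi ↦ ?_, fun x hx ↦ ?_, fun x hx y hy hxy ↦ ?_,
    fun x i j k hij hjk hk hxi hxk ↦ h₁.mem_concatBags_of_le_of_le h₂ hsep hij hjk hk hxi hxk⟩
  · rcases Nat.lt_or_ge i n₁ with hin | hin
    · rw [concatBags_of_lt hin]
      exact (h₁.subset i hin).trans Set.subset_union_left
    · rw [concatBags_of_le hin]
      exact (h₂.subset _ (by omega)).trans Set.subset_union_right
  · rcases hx with hx | hx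
    · obtain ⟨i, hi, hxi⟩ := h₁.exists_mem x hx
      exact ⟨i, by omega, by rwa [concatBags_of_lt hi]⟩
    · obtain ⟨i, hi, hxi⟩ := h₂.exists_mem x hx
      exact ⟨n₁ + i, by omega, by rwa [concatBags_add]⟩
  by_cases h₁₁ : x ∈ S₁ ∧ y ∈ S₁
  · obtain ⟨i, hi, hxy⟩ := h₁.exists_mem_of_adj x h₁₁.1 y h₁₁.2 hxy
    exact ⟨i, by omega, by rwa [concatBags_of_lt hi]⟩
  by_cases h₂₂ : x ∈ S₂ ∧ y ∈ S₂
  · obtain ⟨i, hi, hxy⟩ := h₂.exists_mem_of_adj x h₂₂.1 y h₂₂.2 hxy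
    exact ⟨n₁ + i, by omega, by rwa [concatBags_add]⟩
  exfalso
  rcases hx with hx | hx <;> rcases hy with hy | hy
  · exact h₁₁ ⟨hx, hy⟩
  · exact hcross x ⟨hx, fun hx' ↦ h₂₂ ⟨hx', hy⟩⟩ y ⟨hy, fun hy' ↦ h₁₁ ⟨hx, hy'⟩⟩ hxy
  · exact hcross y ⟨hy, fun hy' ↦ h₂₂ ⟨hx, hy'⟩⟩ x ⟨hx, fun hx' ↦ h₁₁ ⟨hx', hy⟩⟩ hxy.symm
  · exact h₂₂ ⟨hx, hy⟩

theorem exists_isPathDecompOn_biUnion {ι : Type*} [DecidableEq ι] {C : ι → Set V}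
    {s : Finset ι} {k : ℕ} (hdisj : (s : Set ι).PairwiseDisjoint C)
    (hadj : ∀ i ∈ s, ∀ j ∈ s, i ≠ j → ∀ x ∈ C i, ∀ y ∈ C j, ¬ G.Adj x y)
    (h : ∀ i ∈ s, ∃ n bag, IsPathDecompOn G (C i) n bag ∧ ∀ j < n, #(bag j) ≤ k + 1) :
    ∃ n bag, IsPathDecompOn G (⋃ i ∈ s, C i) n bag ∧ ∀ j < n, #(bag j) ≤ k + 1 := by
  induction s using Finset.induction_on with
  | empty => exact ⟨0, fun _ ↦ ∅, by simpa using isPathDecompOn_empty _, by simp⟩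
  | insert a s has ih =>
    obtain ⟨n₁, bag₁, h₁, hw₁⟩ := h a (mem_insert_self a s)
    obtain ⟨n₂, bag₂, h₂, hw₂⟩ := ih (hdisj.subset (by simp))
      (fun i hi j hj ↦ hadj i (mem_insert_of_mem hi) j (mem_insert_of_mem hj))
      (fun i hi ↦ h i (mem_insert_of_mem hi))
    have hsep : ∀ x ∈ C a, ∀ y ∈ ⋃ i ∈ s, C i, x ≠ y ∧ ¬ G.Adj x y := by
      intro x hx y hy
      obtain ⟨j, hj, hyj⟩ := Set.mem_iUnion₂.1 hy
      have haj : a ≠ j := fun h ↦ has (h ▸ hj)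
      refine ⟨fun hxy ↦ ?_, hadj a (mem_insert_self a s) j (mem_insert_of_mem hj) haj x hx y hyj⟩
      exact Set.disjoint_left.1 (hdisj (by simp) (by simp [hj]) haj) hx (hxy ▸ hyj)
    refine ⟨n₁ + n₂, concatBags n₁ bag₁ bag₂, ?_, card_concatBags_le hw₁ hw₂⟩
    rw [Finset.set_biUnion_insert]
    exact h₁.concat h₂ (fun x hx ↦ absurd rfl (hsep x hx.1 x hx.2).1)
      (fun x hx y hy ↦ (hsep x hx.1 y hy.1).2)

theorem PathDecomp.isPathDecompOn {S : Set V} (D : PathDecomp (G.induce S)) :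
    IsPathDecompOn G S (D.n + 1) fun i ↦ (D.bag (Fin.clamp i D.n)).map (.subtype _) := by
  have hclamp (i : Fin (D.n + 1)) : Fin.clamp i D.n = i :=
    Fin.ext (min_eq_left (Nat.le_of_lt_succ i.2))
  refine ⟨fun i _ ↦ Finset.map_subtype_subset _, fun x hx ↦ ?_, fun x hx y hy hxy ↦ ?_,
    fun x i j k hij hjk _ hxi hxk ↦ ?_⟩
  · obtain ⟨i, hi⟩ := D.cov_vert ⟨x, hx⟩
    exact ⟨i, i.2, by rw [hclamp]; exact Finset.mem_map_of_mem _ hi⟩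
  · obtain ⟨i, hxi, hyi⟩ := D.cov_edge (u := ⟨x, hx⟩) (w := ⟨y, hy⟩) hxy
    exact ⟨i, i.2, by rw [hclamp]; exact Finset.mem_map_of_mem _ hxi,
      by rw [hclamp]; exact Finset.mem_map_of_mem _ hyi⟩
  · have hx : x ∈ S := Finset.property_of_mem_map_subtype _ hxi
    have mem (l : ℕ) : x ∈ (D.bag (Fin.clamp l D.n)).map (.subtype _) ↔
        ⟨x, hx⟩ ∈ D.bag (Fin.clamp l D.n) := Finset.mem_map' (.subtype _) (a := ⟨x, hx⟩)
    rw [mem] at hxi hxk ⊢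
    exact D.interval _ _ _ _ (Fin.clamp_monotone hij) (Fin.clamp_monotone hjk) hxi hxk

theorem pwLE.exists_isPathDecompOn {S : Set V} {k : ℕ} (h : pwLE (G.induce S) k) :
    ∃ n bag, IsPathDecompOn G S n bag ∧ ∀ i < n, #(bag i) ≤ k + 1 := by
  obtain ⟨D, hw⟩ := h
  exact ⟨D.n + 1, _, D.isPathDecompOn, fun i _ ↦ by rw [Finset.card_map]; exact hw _⟩

theorem rpwLE.exists_isPathDecompOn {S : Set V} {x : S} {k : ℕ} (h : rpwLE (G.induce S) x k) :
    ∃ n bag, IsPathDecompOn G S n bag ∧ (∀ i < n, #(bag i) ≤ k + 1) ∧ ↑x ∈ bag (n - 1) := by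
  obtain ⟨D, hx, hw⟩ := h
  refine ⟨D.n + 1, _, D.isPathDecompOn, fun i _ ↦ ?_, ?_⟩
  · rw [Finset.card_map]; exact hw _
  · rw [Nat.add_sub_cancel, Fin.clamp_eq_last _ _ le_rfl]
    exact Finset.mem_map_of_mem _ hx

theorem IsPathDecompOn.rpwLE {n : ℕ} {bag : ℕ → Finset V} {v : V} {k : ℕ}
    (h : IsPathDecompOn G Set.univ n bag) (hn : 0 < n) (hv : v ∈ bag (n - 1))
    (hw : ∀ i < n, #(bag i) ≤ k + 1) : rpwLE G v k := by
  refine ⟨⟨n - 1, fun i ↦ bag i, fun x y hxy ↦ ?_, fun x ↦ ?_, fun x i j k hij hjk hi hk ↦ ?_⟩,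
    hv, fun i ↦ hw i (by have := i.2; dsimp only at this; omega)⟩
  · obtain ⟨i, hi, hxy⟩ := h.exists_mem_of_adj x trivial y trivial hxy
    exact ⟨⟨i, by omega⟩, hxy⟩
  · obtain ⟨i, hi, hx⟩ := h.exists_mem x trivial
    exact ⟨⟨i, by omega⟩, hx⟩
  · exact h.mem_of_le_of_le x i j k hij hjk (by omega) hi hk

theorem rpwLE_of_isPathDecompOn [DecidableEq V] {v a : V} {A B : Set V} {p q nA nB : ℕ}
    {bagA bagB : ℕ → Finset V} (hcover : ∀ x, x = v ∨ x ∈ A ∨ x ∈ B) (hvA : v ∉ A)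
    (hAB : Disjoint A B) (hnoadj : ∀ x ∈ A, ∀ y ∈ B, ¬ G.Adj x y)
    (hva : ∀ x ∈ A, G.Adj v x → x = a) (haA : a ∈ A)
    (hA : IsPathDecompOn G A nA bagA) (ha : a ∈ bagA (nA - 1)) (hwA : ∀ i < nA, #(bagA i) ≤ p + 1)
    (hB : IsPathDecompOn G B nB bagB) (hwB : ∀ i < nB, #(bagB i) ≤ q + 1) :
    rpwLE G v (max p (q + 1)) := by
  have haB : a ∉ B := Set.disjoint_left.1 hAB haA
  have hB' : IsPathDecompOn G (insert v (insert a B)) (1 + nB)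
      fun i ↦ insert v (concatBags 1 (fun _ ↦ {a}) bagB i) := by
    have h := (isPathDecompOn_const {a}).concat hB
      (fun x hx ↦ absurd (Finset.mem_singleton.1 hx.1 ▸ hx.2) haB)
      (fun x hx y hy ↦ Finset.mem_singleton.1 hx.1 ▸ hnoadj a haA y hy.1)
    rw [Finset.coe_singleton, Set.singleton_union] at h
    exact h.insert (by omega) v
  have hsep : ∀ x ∈ A ∩ insert v (insert a B), x = a := by
    rintro x ⟨hxA, rfl | rfl | hxB⟩
    exacts [absurd hxA hvA, rfl, absurd hxB (Set.disjoint_left.1 hAB hxA)]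
  have h := hA.concat hB'
    (fun x hx ↦ by obtain rfl := hsep x hx; exact ⟨ha, by simp [concatBags]⟩)
    (by
      rintro x ⟨hxA, hx⟩ y ⟨rfl | rfl | hyB, hyA⟩ hxy
      exacts [hx (hva x hxA hxy.symm ▸ Set.mem_insert_of_mem _ (Set.mem_insert _ _)),
        hyA haA, hnoadj x hxA y hyB hxy])
  have huniv : A ∪ insert v (insert a B) = Set.univ :=
    Set.eq_univ_of_forall fun x ↦ by rcases hcover x with h | h | h <;> simp [h]
  rw [huniv] at h
  refine h.rpwLE (by omega) ?_ (card_concatBags_le (fun i hi ↦ (hwA i hi).trans ?_) fun i hi ↦ ?_)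
  · rw [concatBags_of_le (by omega)]
    exact Finset.mem_insert_self _ _
  · omega
  · refine (Finset.card_insert_le _ _).trans ?_
    have := card_concatBags_le (fun _ _ ↦ (Finset.card_singleton a).trans_le (by omega)) hwB i hi
    omega

end PathDecompOn

section CompOf

variable {T : SimpleGraph V} {v a b x y : V}

theorem mem_compOf_self (ha : a ≠ v) : a ∈ CompOf T v a := ⟨ha, ha, .rfl⟩

theorem ne_of_mem_compOf (hx : x ∈ CompOf T v a) : x ≠ v := hx.1

theorem mem_compOf_of_adj (hx : x ∈ CompOf T v a) (hxy : T.Adj x y) (hy : y ≠ v) :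
    y ∈ CompOf T v a := by
  obtain ⟨hx, ha, hax⟩ := hx
  exact ⟨hy, ha, hax.trans (Adj.reachable (G := T.induce {y | y ≠ v}) (u := ⟨x, hx⟩)
    (v := ⟨y, hy⟩) hxy)⟩

theorem not_adj_of_disjoint_compOf (hab : Disjoint (CompOf T v a) (CompOf T v b))
    (hx : x ∈ CompOf T v a) (hy : y ∈ CompOf T v b) : ¬ T.Adj x y := fun hxy ↦
  Set.disjoint_left.1 hab (mem_compOf_of_adj hx hxy (ne_of_mem_compOf hy)) hy

/-- Two neighbours of `v` joined in `T - v` would close a cycle through `v`, so the edge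
`vb` would not be a bridge. -/
theorem SimpleGraph.IsAcyclic.disjoint_compOf (hT : T.IsAcyclic) (ha : T.Adj v a) (hb : T.Adj v b)
    (hab : a ≠ b) : Disjoint (CompOf T v a) (CompOf T v b) := by
  refine Set.disjoint_left.2 fun x ⟨_, ha', hax⟩ ⟨_, hb', hbx⟩ ↦ ?_
  let φ : T.induce {y | y ≠ v} →g T.deleteEdges {s(v, b)} :=
    ⟨Subtype.val, fun {x y} hxy ↦ deleteEdges_adj.2
      ⟨hxy, by simp [show (x : V) ≠ v from x.2, show (y : V) ≠ v from y.2]⟩⟩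
  have hvb : (T.deleteEdges {s(v, b)}).Reachable v b :=
    (deleteEdges_adj.2 ⟨ha, by simp [hab, hb.ne]⟩).reachable.trans ((hax.trans hbx.symm).map φ)
  exact isBridge_iff.1 (isAcyclic_iff_forall_adj_isBridge.1 hT hb) hvb

theorem SimpleGraph.IsAcyclic.eq_of_adj_of_mem_compOf (hT : T.IsAcyclic) (ha : T.Adj v a)
    (hx : T.Adj v x) (hxa : x ∈ CompOf T v a) : x = a := by
  by_contra hne
  exact Set.disjoint_left.1 (hT.disjoint_compOf hx ha hne) (mem_compOf_self hx.ne') hxa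

theorem SimpleGraph.Connected.exists_adj_mem_compOf (hT : T.Connected) (hx : x ≠ v) :
    ∃ a, T.Adj v a ∧ x ∈ CompOf T v a := by
  classical
  obtain ⟨p, hp⟩ := (hT.preconnected v x).some.toPath
  cases p with
  | nil => exact absurd rfl hx
  | @cons _ a _ hva q =>
    have hq : ∀ y ∈ q.support, y ∈ {y | y ≠ v} := fun y hy hyv ↦
      (Walk.cons_isPath_iff hva q).1 hp |>.2 (hyv ▸ hy)
    exact ⟨a, hva, hx, hva.ne', ⟨q.induce _ hq⟩⟩

end CompOf

theorem rpwLE_rpw [Finite V] (G : SimpleGraph V) (x : V) : rpwLE G x (rpw G x) := by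
  classical
  have := Fintype.ofFinite V
  suffices h : rpwLE G x (Fintype.card V - 1) from Nat.sInf_mem (s := {r | rpwLE G x r}) ⟨_, h⟩
  refine ⟨⟨0, fun _ ↦ univ, fun _ _ _ ↦ ⟨0, mem_univ _, mem_univ _⟩, fun _ ↦ ⟨0, mem_univ _⟩,
    fun _ _ _ _ _ _ _ _ ↦ mem_univ _⟩, mem_univ _, fun _ ↦ ?_⟩
  have := Fintype.card_pos_iff.2 ⟨x⟩
  rw [card_univ]
  omega

theorem rpwLE_of_compOf {ι : Type*} [Fintype ι] {T : SimpleGraph V} {v : V} (hT : T.Connected)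
    (hT' : T.IsAcyclic) {w : ι → V} (hinj : Function.Injective w)
    (hnbr : ∀ u, T.Adj v u ↔ ∃ m, w m = u) {z : ι} {p q : ℕ}
    (hz : rpwLE (T.induce (CompOf T v (w z))) ⟨w z, mem_compOf_self ((hnbr _).2 ⟨z, rfl⟩).ne'⟩ p)
    (hq : ∀ m ≠ z, pwLE (T.induce (CompOf T v (w m))) q) :
    rpwLE T v (max p (q + 1)) := by
  classical
  set C : ι → Set V := fun m ↦ CompOf T v (w m)
  have hadj (m : ι) : T.Adj v (w m) := (hnbr _).2 ⟨m, rfl⟩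
  have hdisj : (Set.univ : Set ι).PairwiseDisjoint C := fun m _ m' _ h ↦
    hT'.disjoint_compOf (hadj m) (hadj m') (hinj.ne h)
  obtain ⟨nA, bagA, hA, hwA, ha⟩ := hz.exists_isPathDecompOn
  obtain ⟨nB, bagB, hB, hwB⟩ := exists_isPathDecompOn_biUnion (s := univ.erase z)
    (hdisj.subset (Set.subset_univ _))
    (fun m _ m' _ h x hx y hy ↦ not_adj_of_disjoint_compOf (hdisj trivial trivial h) hx hy)
    fun m hm ↦ (hq m (ne_of_mem_erase hm)).exists_isPathDecompOn
  refine rpwLE_of_isPathDecompOn (fun x ↦ ?_) (ne_of_mem_compOf · rfl)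
    (Set.disjoint_iUnion₂_right.2 fun m hm ↦ hdisj trivial trivial (ne_of_mem_erase hm).symm)
    (fun x hx y hy ↦ ?_) (fun x hx hvx ↦ hT'.eq_of_adj_of_mem_compOf (hadj z) hvx hx)
    (mem_compOf_self (hadj z).ne') hA ha hwA hB hwB
  · by_cases hxv : x = v
    · exact Or.inl hxv
    obtain ⟨a, hva, hxa⟩ := hT.exists_adj_mem_compOf hxv
    obtain ⟨m, rfl⟩ := (hnbr a).1 hva
    by_cases hmz : m = z
    · exact Or.inr (Or.inl (hmz ▸ hxa))
    · exact Or.inr (Or.inr (Set.mem_biUnion (mem_erase.2 ⟨hmz, mem_univ _⟩) hxa))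
  · obtain ⟨m, hm, hy⟩ := Set.mem_iUnion₂.1 hy
    exact not_adj_of_disjoint_compOf (hdisj trivial trivial (ne_of_mem_erase hm).symm) hx hy

/-- Let `T` be a tree, `v` a vertex with neighbours `w 0, …,
w (d-1)`, and let `r m` be the rooted pathwidth of the component of `T - v`
containing `w m`, rooted at `w m`, the enumeration being chosen so the values `r m`
are sorted in decreasing order. Then `rpw(T, v) ≤ max {r 0, r 1 + 1}`. -/
theorem stmt10 {V : Type} [Fintype V] (T : SimpleGraph V)
    (htree : T.Connected ∧ T.IsAcyclic) (v : V) (d : ℕ) (hd : 1 < d)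
    (w : Fin d → V) (hinj : Function.Injective w)
    (hnbr : ∀ u, T.Adj v u ↔ ∃ m, w m = u)
    (r : Fin d → ℕ) (hsorted : Antitone r)
    (hr : ∀ m : Fin d, r m = rpw (T.induce (CompOf T v (w m)))
      ⟨w m, by
        have hadj : T.Adj v (w m) := (hnbr (w m)).mpr ⟨m, rfl⟩
        exact ⟨hadj.ne', hadj.ne', Reachable.refl _⟩⟩) :
    rpw T v ≤ max (r ⟨0, by omega⟩) (r ⟨1, hd⟩ + 1) := by
  refine Nat.sInf_le
    (rpwLE_of_compOf htree.1 htree.2 hinj hnbr (z := ⟨0, by omega⟩) ?_ fun m hm ↦ ?_)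
  · rw [hr]
    exact rpwLE_rpw _ _
  · have hrm : r m ≤ r ⟨1, hd⟩ :=
      hsorted (Nat.one_le_iff_ne_zero.2 (Fin.val_ne_iff.2 hm))
    obtain ⟨D, -, hD⟩ := rpwLE_rpw (T.induce (CompOf T v (w m)))
      ⟨w m, mem_compOf_self ((hnbr _).2 ⟨m, rfl⟩).ne'⟩
    exact ⟨D, fun i ↦ (hD i).trans (by rw [← hr]; omega)⟩
end Defs
end

section
/- Suppose d(v) ≤ 2^{i+j} counts leaves adjacent to v among the leaves of 2^i disjoint subtrees each having 2^j leaves, with d(v) ≥ 2^{i+j}/(h−k+1). If v is 'good' for fewer than k of the subtrees (good meaning adjacent to at least 2^{j−1}/(h−k+1) leaves of that subtree), then 2^i ≤ (k−1)(2h−2k+1). -/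
open SimpleGraph

universe u v

section Defs

variable {V : Type u} {W : Type v}

open Finset

/-! With `c = h - k + 1`, each of the `g ≤ k - 1` good subtrees contributes at most `2^j`
adjacent leaves and each of the `2^i - g` others fewer than `2^j / (2c)`. Against the lower
bound `2^(i+j) / c` on the total this forces `2^i ≤ g (2c - 1) ≤ (k - 1)(2h - 2k + 1)`. -/

theorem Finset.sum_le_card_filter_nsmul_add {ι R : Type*} [AddCommMonoid R] [LinearOrder R]
    [IsOrderedAddMonoid R] (s : Finset ι) (f : ι → R) {M : R} (b : R) (hM : ∀ x ∈ s, f x ≤ M) :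
    ∑ x ∈ s, f x ≤ #{x ∈ s | b ≤ f x} • M + #{x ∈ s | ¬b ≤ f x} • b := by
  rw [← sum_filter_add_sum_filter_not s (b ≤ f ·)]
  gcongr
  · exact sum_le_card_nsmul _ _ _ fun x hx => hM x (mem_filter.1 hx).1
  · exact sum_le_card_nsmul _ _ _ fun x hx => (not_le.1 (mem_filter.1 hx).2).le

theorem le_mul_two_mul_sub_one_of_div_le {g r L c : ℝ} (hL : 0 < L) (hc : 0 < c)
    (h : (g + r) * L / c ≤ g * L + r * (L / (2 * c))) : g + r ≤ g * (2 * c - 1) := by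
  have hscaled : (g + r) * L ≤ g * L * c + r * L / 2 := by
    have e : (g * L + r * (L / (2 * c))) * c = g * L * c + r * L / 2 := by field_simp
    linarith [(div_le_iff₀ hc).1 h]
  nlinarith

theorem stmt14_general {W : Type} (h k i j : ℕ) (hkh : k ≤ h)
    (A : W → Prop) [DecidablePred A]
    (Lsub : Fin (2 ^ i) → Finset W)
    (hcard : ∀ m, (Lsub m).card = 2 ^ j)
    (hd : (2 : ℝ) ^ (i + j) / ((h : ℝ) - (k : ℝ) + 1) ≤
      ((∑ m, ((Lsub m).filter A).card : ℕ) : ℝ))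
    (hgood : ({m : Fin (2 ^ i) |
        (2 : ℝ) ^ j / (2 * ((h : ℝ) - (k : ℝ) + 1)) ≤
          (((Lsub m).filter A).card : ℝ)}).ncard < k) :
    (2 : ℝ) ^ i ≤ ((k : ℝ) - 1) * (2 * (h : ℝ) - 2 * (k : ℝ) + 1) := by
  set c : ℝ := h - k + 1
  have hc : 1 ≤ c := by
    have : (k : ℝ) ≤ h := by exact_mod_cast hkh
    linarith
  set d : Fin (2 ^ i) → ℝ := fun m => ((Lsub m).filter A).card
  set good := #{m | (2 : ℝ) ^ j / (2 * c) ≤ d m}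
  set bad := #{m | ¬(2 : ℝ) ^ j / (2 * c) ≤ d m}
  have hgood_le : (good : ℝ) ≤ k - 1 := by
    have hlt : good < k := by rwa [← coe_filter_univ, Set.ncard_coe_finset] at hgood
    rw [le_sub_iff_add_le]
    exact_mod_cast hlt
  have hsplit : (2 : ℝ) ^ i = good + bad := by
    have hcount : good + bad = 2 ^ i := by
      rw [card_filter_add_card_filter_not, card_univ, Fintype.card_fin]
    exact_mod_cast hcount.symm
  have hsum : ∑ m, d m ≤ good • (2 : ℝ) ^ j + bad • (2 ^ j / (2 * c)) :=
    sum_le_card_filter_nsmul_add _ d _ fun m _ => by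
      simpa only [d, hcard, Nat.cast_pow, Nat.cast_ofNat] using
        Nat.cast_le (α := ℝ) |>.2 (card_filter_le (Lsub m) A)
  have key : (good + bad : ℝ) ≤ good * (2 * c - 1) := by
    refine le_mul_two_mul_sub_one_of_div_le (L := 2 ^ j) (by positivity) (by linarith) ?_
    rw [← hsplit, ← pow_add]
    rw [Nat.cast_sum] at hd
    simpa only [nsmul_eq_mul] using hd.trans hsum
  calc (2 : ℝ) ^ i ≤ good * (2 * c - 1) := hsplit ▸ key
    _ ≤ (k - 1) * (2 * c - 1) := by gcongr; linarith
    _ = _ := by ring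

/-- Pigeonhole estimate: if `v` is adjacent to at least
`2^(i+j)/(h-k+1)` of the leaves of `2^i` disjoint subtrees each with `2^j` leaves,
but is "good" (adjacent to at least `2^(j-1)/(h-k+1)` leaves of a subtree) for
fewer than `k` of the subtrees, then `2^i ≤ (k-1)(2h-2k+1)`. -/
theorem stmt14 {W : Type} (h k i j : ℕ) (hk : 1 ≤ k) (hkh : k ≤ h)
    (hi : 0 < i) (hj : 0 < j)
    (A : W → Prop) [DecidablePred A]
    (Lsub : Fin (2 ^ i) → Finset W)
    (hdisj : ∀ m m', m ≠ m' → Disjoint (Lsub m) (Lsub m'))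
    (hcard : ∀ m, (Lsub m).card = 2 ^ j)
    (hd : (2 : ℝ) ^ (i + j) / ((h : ℝ) - (k : ℝ) + 1) ≤
      ((∑ m, ((Lsub m).filter A).card : ℕ) : ℝ))
    (hgood : ({m : Fin (2 ^ i) |
        (2 : ℝ) ^ j / (2 * ((h : ℝ) - (k : ℝ) + 1)) ≤
          (((Lsub m).filter A).card : ℝ)}).ncard < k) :
    (2 : ℝ) ^ i ≤ ((k : ℝ) - 1) * (2 * (h : ℝ) - 2 * (k : ℝ) + 1) :=
  stmt14_general h k i j hkh A Lsub hcard hd hgood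
end Defs
end
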